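/- arXiv:2212.08212 — 9 statements merged into one kernel-verified Lean document; each statement's English description precedes it below -/
import Mathlib

section
/- Let ℓ ≤ k be positive integers, let α₁,…,α_ℓ be distinct elements of a field 𝔽, and for each i let A_i ∈ 𝔽^{n×m_i} have full column rank m_i. Let V(z) = (z^{k-1}, …, z, 1)ᵀ be the Vandermonde vector of degree k-1. Then the matrix C = [V(α₁) ⊗ A₁ | ⋯ | V(α_ℓ) ⊗ A_ℓ] ∈ 𝔽^{kn × m}, where m = Σ m_i, has full column rank m. -/
open Polynomial Matrix

lemma aux_rank_iff {F : Type*} [Field F] {p q : Type*} [Fintype p] [Fintype q]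
    (M : Matrix p q F) :
    M.rank = Fintype.card q ↔ Function.Injective M.mulVecLin := by
  have hrn := LinearMap.finrank_range_add_finrank_ker M.mulVecLin
  rw [Module.finrank_pi] at hrn
  rw [← LinearMap.ker_eq_bot, ← Submodule.finrank_eq_zero (R := F)]
  unfold Matrix.rank
  omega

theorem stmt0 {F : Type*} [Field F] (k ℓ n : ℕ) (hℓ : 0 < ℓ) (hk : ℓ ≤ k)
    (m : Fin ℓ → ℕ) (α : Fin ℓ → F) (hα : Function.Injective α)
    (A : (i : Fin ℓ) → Matrix (Fin n) (Fin (m i)) F)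
    (hA : ∀ i, (A i).rank = m i) :
    (Matrix.of fun (r : Fin k × Fin n) (c : (i : Fin ℓ) × Fin (m i)) =>
      (α c.1) ^ (k - 1 - (r.1 : ℕ)) * A c.1 r.2 c.2).rank = ∑ i, m i := by
  have hcard : Fintype.card ((i : Fin ℓ) × Fin (m i)) = ∑ i, m i := by
    simp [Fintype.card_sigma]
  rw [← hcard, aux_rank_iff]
  rw [← LinearMap.ker_eq_bot, LinearMap.ker_eq_bot']
  intro x hx
  -- y i r = (A i).mulVec (x restricted to block i) at row r
  set y : Fin ℓ → Fin n → F := fun i r => (A i).mulVec (fun c => x ⟨i, c⟩) r with hy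
  have hx' : ∀ (j : Fin k) (r : Fin n), ∑ i, y i r * α i ^ (k - 1 - (j : ℕ)) = 0 := by
    intro j r
    have := congrFun hx (j, r)
    simp only [Matrix.mulVecLin_apply, Matrix.mulVec, dotProduct, Pi.zero_apply,
      Matrix.of_apply] at this
    rw [← this, ← Finset.univ_sigma_univ, Finset.sum_sigma]
    refine Finset.sum_congr rfl fun i _ => ?_
    simp only [hy, Matrix.mulVec, dotProduct, Finset.sum_mul]
    refine Finset.sum_congr rfl fun c _ => ?_
    ring
  have hy0 : ∀ i r, y i r = 0 := by
    intro i r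
    have key : (fun i => y i r) = 0 := by
      apply eq_zero_of_forall_pow_sum_mul_pow_eq_zero hα
      intro e
      have he : (e : ℕ) < k := lt_of_lt_of_le e.2 hk
      have hj : k - 1 - (k - 1 - (e : ℕ)) = (e : ℕ) := by omega
      have := hx' ⟨k - 1 - (e : ℕ), by omega⟩ r
      simpa [hj] using this
    exact congrFun key i
  have hxi : ∀ (i : Fin ℓ) (c : Fin (m i)), x ⟨i, c⟩ = 0 := by
    intro i c
    have hinj : Function.Injective (A i).mulVecLin := by
      rw [← aux_rank_iff]
      simpa using hA i
    rw [← LinearMap.ker_eq_bot, LinearMap.ker_eq_bot'] at hinj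
    have : (fun c => x ⟨i, c⟩) = 0 := by
      apply hinj
      funext r
      exact hy0 i r
    exact congrFun this c
  funext c
  exact hxi c.1 c.2
end

section
/- Let ℓ ≤ k be positive integers, α ∈ 𝔽, M(z) an n×p matrix polynomial over 𝔽 such that M(α) has full column rank, and V(z) = (z^{k-1},…,z,1)ᵀ. Then the kn × ℓp matrix whose block columns are the 0th through (ℓ-1)th derivatives of V(z) ⊗ M(z) with respect to z, evaluated at z = α, has full column rank ℓp. -/
open Polynomial Matrix Finset

section Aux

variable {F : Type*} [Field F] [CharZero F]

private lemma stmt1_inj_of_rank {m q : ℕ} (A : Matrix (Fin m) (Fin q) F) (h : A.rank = q) :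
    Function.Injective A.mulVecLin := by
  rw [← LinearMap.ker_eq_bot]
  have h2 := A.mulVecLin.finrank_range_add_finrank_ker
  rw [Matrix.rank] at h
  simp only [Module.finrank_pi, Fintype.card_fin] at h2
  apply Submodule.finrank_eq_zero.mp
  omega

private lemma stmt1_vand_ker {k ℓ : ℕ} (hk : ℓ ≤ k) (α : F) (c : Fin ℓ → F)
    (h : ∀ m : ℕ, m < k → ∑ s : Fin ℓ, c s * eval α (derivative^[(s : ℕ)] (X ^ m : F[X])) = 0) :
    c = 0 := by
  set L : F[X] →ₗ[F] F :=
    ∑ s : Fin ℓ, c s • ((Polynomial.leval α).comp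
      ((Polynomial.derivative : F[X] →ₗ[F] F[X]) ^ (s : ℕ))) with hL
  have hLapp : ∀ f : F[X], L f = ∑ s : Fin ℓ, c s * eval α (derivative^[(s : ℕ)] f) := by
    intro f
    simp [hL, LinearMap.sum_apply, Module.End.pow_apply]
  have hdeg : ∀ f : F[X], f.natDegree < k → L f = 0 := by
    intro f hf
    rw [f.as_sum_range' k hf, map_sum]
    refine Finset.sum_eq_zero fun m hm => ?_
    rw [← smul_X_eq_monomial, LinearMap.map_smul, hLapp, h m (mem_range.mp hm), smul_zero]
  funext s₀
  have h1 : L ((X - C α) ^ (s₀ : ℕ)) = 0 := by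
    apply hdeg
    exact lt_of_le_of_lt (natDegree_pow_le.trans (by simp [natDegree_X_sub_C]))
      (lt_of_lt_of_le s₀.2 hk)
  rw [hLapp] at h1
  have h2 : ∀ s : Fin ℓ, s ≠ s₀ →
      c s * eval α (derivative^[(s : ℕ)] ((X - C α) ^ (s₀ : ℕ))) = 0 := by
    intro s hs
    rw [iterate_derivative_X_sub_pow]
    rcases lt_or_gt_of_ne (fun e => hs (Fin.ext e)) with hlt | hgt
    · have : (0:ℕ) < (s₀ : ℕ) - s := by omega
      simp [eval_smul, this, zero_pow this.ne']
    · simp [Nat.descFactorial_eq_zero_iff_lt.mpr hgt]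
  rw [Finset.sum_eq_single s₀ (fun s _ hs => h2 s hs) (by simp)] at h1
  rw [iterate_derivative_X_sub_pow_self] at h1
  simp only [eval_natCast] at h1
  have : ((s₀ : ℕ).factorial : F) ≠ 0 := Nat.cast_ne_zero.mpr (Nat.factorial_ne_zero _)
  simpa [this] using h1

private lemma stmt1_T_ker {ℓ n p : ℕ} {N : Matrix (Fin n) (Fin p) F[X]} {α : F}
    (hinj : Function.Injective (N.map (eval α)).mulVecLin)
    (x : Fin ℓ × Fin p → F)
    (h : ∀ (s : Fin ℓ) (r : Fin n),
      ∑ j : Fin ℓ, ∑ c : Fin p,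
        x (j, c) * (((j : ℕ).choose s : F) * eval α (derivative^[(j : ℕ) - s] (N r c))) = 0) :
    x = 0 := by
  have key : ∀ m : ℕ, ∀ j : Fin ℓ, ℓ - (j : ℕ) ≤ m → ∀ c, x (j, c) = 0 := by
    intro m
    induction m with
    | zero => intro j hj; omega
    | succ m ih =>
      intro j hj c
      have ih' : ∀ j' : Fin ℓ, (j : ℕ) < (j' : ℕ) → ∀ c', x (j', c') = 0 := by
        intro j' hj' c'
        exact ih j' (by omega) c'
      have hrow : ∀ r : Fin n, ∑ c' : Fin p, x (j, c') * eval α (N r c') = 0 := by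
        intro r
        have := h j r
        rw [Finset.sum_eq_single j] at this
        · simpa using this
        · intro j' _ hne
          rcases lt_or_gt_of_ne (fun e => hne (Fin.ext e)) with hlt | hgt
          · simp [Nat.choose_eq_zero_of_lt hlt]
          · exact Finset.sum_eq_zero fun c' _ => by rw [ih' j' hgt c', zero_mul]
        · simp
      have h0 : (N.map (eval α)).mulVecLin (fun c' => x (j, c')) = 0 := by
        ext r
        simpa [Matrix.mulVecLin_apply, Matrix.mulVec, dotProduct, Matrix.map_apply,
          mul_comm] using hrow r
      have := hinj (by rw [h0, map_zero] :
        (N.map (eval α)).mulVecLin (fun c' => x (j, c')) = (N.map (eval α)).mulVecLin 0)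
      exact congrFun this c
  funext jc
  exact key ℓ jc.1 (by omega) jc.2

private lemma stmt1_leibniz_point (e j L : ℕ) (hj : j < L) (f : F[X]) (α : F) :
    ∑ s ∈ range L, ((j.choose s : F) * eval α (derivative^[j - s] f)) *
        eval α (derivative^[s] (X ^ e : F[X]))
      = eval α (derivative^[j] (X ^ e * f)) := by
  rw [mul_comm (X ^ e : F[X]) f, iterate_derivative_mul, eval_finset_sum]
  rw [← Finset.sum_subset (Finset.range_subset_range.mpr hj)]
  · refine Finset.sum_congr rfl fun s hs => ?_
    simp only [nsmul_eq_mul, eval_mul, eval_natCast]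
    ring
  · intro s _ hs
    have : j < s := by simpa using hs
    simp [Nat.choose_eq_zero_of_lt this]

end Aux

theorem stmt1 {F : Type*} [Field F] [CharZero F] (k ℓ n p : ℕ)
    (hℓ : 0 < ℓ) (hk : ℓ ≤ k) (α : F)
    (M : Matrix (Fin n) (Fin p) (Polynomial F))
    (hM : (M.map (Polynomial.eval α)).rank = p) :
    (Matrix.of fun (r : Fin k × Fin n) (c : Fin ℓ × Fin p) =>
      Polynomial.eval α (Polynomial.derivative^[(c.1 : ℕ)]
        (Polynomial.X ^ (k - 1 - (r.1 : ℕ)) * M r.2 c.2))).rank = ℓ * p := by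
  set A : Matrix (Fin k × Fin n) (Fin ℓ × Fin p) F :=
    Matrix.of fun (r : Fin k × Fin n) (c : Fin ℓ × Fin p) =>
      Polynomial.eval α (Polynomial.derivative^[(c.1 : ℕ)]
        (Polynomial.X ^ (k - 1 - (r.1 : ℕ)) * M r.2 c.2)) with hA
  have hMinj : Function.Injective (M.map (eval α)).mulVecLin := stmt1_inj_of_rank _ hM
  have hAinj : Function.Injective A.mulVecLin := by
    rw [← LinearMap.ker_eq_bot, LinearMap.ker_eq_bot']
    intro x hx
    have hx' : ∀ (i : Fin k) (r : Fin n),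
        ∑ j : Fin ℓ, ∑ c : Fin p,
          eval α (derivative^[(j : ℕ)] (X ^ (k - 1 - (i : ℕ)) * M r c)) * x (j, c) = 0 := by
      intro i r
      have := congrFun hx (i, r)
      simpa [hA, Matrix.mulVecLin_apply, Matrix.mulVec, dotProduct,
        Fintype.sum_prod_type] using this
    set y : Fin ℓ × Fin n → F := fun sr =>
      ∑ j : Fin ℓ, ∑ c : Fin p, x (j, c) * (((j : ℕ).choose sr.1 : F) *
        eval α (derivative^[(j : ℕ) - (sr.1 : ℕ)] (M sr.2 c))) with hy_def
    have hy : y = 0 := by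
      funext sr
      obtain ⟨s, r⟩ := sr
      have hvk : (fun s : Fin ℓ => y (s, r)) = 0 := by
        apply stmt1_vand_ker hk α
        intro m hm
        have him : k - 1 - ((⟨k - 1 - m, by omega⟩ : Fin k) : ℕ) = m := by
          show k - 1 - (k - 1 - m) = m
          omega
        have H := hx' ⟨k - 1 - m, by omega⟩ r
        rw [him] at H
        rw [← H]
        have expand : ∀ (j : Fin ℓ) (c : Fin p),
            eval α (derivative^[(j : ℕ)] (X ^ m * M r c)) =
              ∑ s : Fin ℓ, (((j : ℕ).choose s : F) *
                eval α (derivative^[(j : ℕ) - (s : ℕ)] (M r c))) *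
                eval α (derivative^[(s : ℕ)] (X ^ m : F[X])) := by
          intro j c
          rw [← stmt1_leibniz_point m (j : ℕ) ℓ j.isLt (M r c) α,
            ← Fin.sum_univ_eq_sum_range]
        simp only [hy_def]
        simp_rw [expand, Finset.sum_mul]
        rw [Finset.sum_comm]
        refine Finset.sum_congr rfl fun j _ => ?_
        rw [Finset.sum_comm]
        exact Finset.sum_congr rfl fun c _ => Finset.sum_congr rfl fun s _ => by ring
      simpa using congrFun hvk s
    apply stmt1_T_ker hMinj
    intro s r
    simpa [hy_def] using congrFun hy (s, r)
  rw [Matrix.rank, LinearMap.finrank_range_of_inj hAinj]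
  simp
end

section
/- Let ℓ₁,…,ℓ_s, k be positive integers with Σᵢ ℓᵢ ≤ k, let α₁,…,α_s ∈ 𝔽 be pairwise distinct, and for i = 1,…,s let Mᵢ(z) ∈ 𝔽[z]^{n×pᵢ} be a matrix polynomial such that Mᵢ(αᵢ) has full column rank. Then the kn × (Σᵢ ℓᵢpᵢ) matrix C = [M_{α₁,k,ℓ₁,M₁(z)} | ⋯ | M_{α_s,k,ℓ_s,M_s(z)}] has full column rank, where M_{αᵢ,k,ℓᵢ,Mᵢ(z)} is the matrix of derivatives of V(z)⊗Mᵢ(z) of orders 0,…,ℓᵢ-1 evaluated at αᵢ. -/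
open Polynomial Matrix

lemma aux_vanish {F : Type*} [CommRing F] (a : F) {d e : ℕ} (h : d < e) (g : F[X]) :
    Polynomial.eval a (Polynomial.derivative^[d] ((X - C a) ^ e * g)) = 0 := by
  rw [Polynomial.iterate_derivative_mul, Polynomial.eval_finset_sum]
  refine Finset.sum_eq_zero fun j hj => ?_
  rw [Polynomial.iterate_derivative_X_sub_pow]
  have h1 : e - (d - j) ≠ 0 := by omega
  simp [zero_pow h1]

lemma aux_key {F : Type*} [CommRing F] (a : F) (d : ℕ) (g : F[X]) :
    Polynomial.eval a (Polynomial.derivative^[d] ((X - C a) ^ d * g)) =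
      d.factorial * Polynomial.eval a g := by
  rw [Polynomial.iterate_derivative_mul, Polynomial.eval_finset_sum]
  rw [Finset.sum_eq_single 0]
  · simp [Polynomial.iterate_derivative_X_sub_pow_self]
  · intro j hj hj0
    rw [Polynomial.iterate_derivative_X_sub_pow]
    have hjd := Finset.mem_range.mp hj
    have h2 : d - (d - j) = j := by omega
    simp [h2, zero_pow hj0]
  · intro h0; exact absurd (Finset.mem_range.mpr d.succ_pos) h0

lemma aux_rank {F : Type*} [Field F] {m n : Type*} [Fintype m] [Fintype n] [DecidableEq n]
    (A : Matrix m n F) :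
    A.rank = Fintype.card n ↔ LinearMap.ker A.mulVecLin = ⊥ := by
  have h := LinearMap.finrank_range_add_finrank_ker A.mulVecLin
  rw [Module.finrank_pi] at h
  rw [Matrix.rank]
  constructor
  · intro hr
    have : Module.finrank F (LinearMap.ker A.mulVecLin) = 0 := by omega
    exact Submodule.finrank_eq_zero.mp this
  · intro hk
    rw [hk, finrank_bot] at h
    omega

theorem stmt2 {F : Type*} [Field F] [CharZero F] (k s n : ℕ)
    (ℓ : Fin s → ℕ) (hℓ : ∀ i, 0 < ℓ i) (hsum : ∑ i, ℓ i ≤ k)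
    (p : Fin s → ℕ) (α : Fin s → F) (hα : Function.Injective α)
    (M : (i : Fin s) → Matrix (Fin n) (Fin (p i)) (Polynomial F))
    (hM : ∀ i, ((M i).map (Polynomial.eval (α i))).rank = p i) :
    (Matrix.of fun (r : Fin k × Fin n) (c : (i : Fin s) × (Fin (ℓ i) × Fin (p i))) =>
      Polynomial.eval (α c.1) (Polynomial.derivative^[(c.2.1 : ℕ)]
        (Polynomial.X ^ (k - 1 - (r.1 : ℕ)) * M c.1 r.2 c.2.2))).rank
      = ∑ i, ℓ i * p i := by
  classical
  set A : Matrix (Fin k × Fin n) ((i : Fin s) × (Fin (ℓ i) × Fin (p i))) F :=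
    Matrix.of fun r c =>
      Polynomial.eval (α c.1) (Polynomial.derivative^[(c.2.1 : ℕ)]
        (Polynomial.X ^ (k - 1 - (r.1 : ℕ)) * M c.1 r.2 c.2.2)) with hA
  rcases Nat.eq_zero_or_pos s with hs | hs
  · subst hs
    have h1 : A.rank = 0 := Nat.le_zero.mp (by simpa using A.rank_le_card_width)
    simp [h1]
  -- s > 0, hence k > 0
  have hk : 0 < k := by
    have := Finset.single_le_sum (f := ℓ) (fun i _ => Nat.zero_le _)
      (Finset.mem_univ ⟨0, hs⟩)
    have := hℓ ⟨0, hs⟩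
    omega
  have hcard : ∑ i, ℓ i * p i = Fintype.card ((i : Fin s) × (Fin (ℓ i) × Fin (p i))) := by
    simp [Fintype.card_sigma]
  rw [hcard, aux_rank A, LinearMap.ker_eq_bot']
  intro v hv
  rw [Matrix.mulVecLin_apply] at hv
  -- the linear functionals
  set E : F → ℕ → (F[X] →ₗ[F] F) := fun a d =>
    (Polynomial.leval a).comp ((Polynomial.derivative : F[X] →ₗ[F] F[X]) ^ d) with hEdef
  have hE : ∀ (a : F) (d : ℕ) (q : F[X]),
      E a d q = Polynomial.eval a (Polynomial.derivative^[d] q) := by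
    intro a d q
    simp [hEdef, Module.End.pow_apply, Polynomial.leval_apply]
  set T : Fin n → (F[X] →ₗ[F] F) := fun j =>
    ∑ c : (i : Fin s) × (Fin (ℓ i) × Fin (p i)),
      v c • (E (α c.1) (c.2.1 : ℕ)).comp (LinearMap.mulRight F (M c.1 j c.2.2)) with hTdef
  have hT : ∀ (j : Fin n) (P : F[X]), T j P =
      ∑ c : (i : Fin s) × (Fin (ℓ i) × Fin (p i)),
        v c * Polynomial.eval (α c.1)
          (Polynomial.derivative^[(c.2.1 : ℕ)] (P * M c.1 j c.2.2)) := by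
    intro j P
    simp [hTdef, hE, smul_eq_mul]
  have hTpow : ∀ (j : Fin n) (e : ℕ), e < k → T j (X ^ e) = 0 := by
    intro j e he
    have h0 := congrFun hv (⟨k - 1 - e, by omega⟩, j)
    have he' : k - 1 - (k - 1 - e) = e := by omega
    rw [hT]
    simp only [Pi.zero_apply, Matrix.mulVec, dotProduct] at h0
    rw [← h0]
    refine Finset.sum_congr rfl fun c _ => ?_
    simp [hA, he', mul_comm]
  have hTdeg : ∀ (j : Fin n) (P : F[X]), P.natDegree < k → T j P = 0 := by
    intro j P hP
    conv_lhs => rw [Polynomial.as_sum_range' P k hP]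
    rw [map_sum]
    refine Finset.sum_eq_zero fun e he => ?_
    rw [← Polynomial.smul_X_eq_monomial, _root_.map_smul,
      hTpow j e (Finset.mem_range.mp he), smul_zero]
  -- main claim, downward induction
  have main : ∀ (m : ℕ) (t : Fin s) (d : Fin (ℓ t)), ℓ t - m ≤ (d : ℕ) →
      ∀ c : Fin (p t), v ⟨t, (d, c)⟩ = 0 := by
    intro m
    induction m with
    | zero => intro t d hd c; exact absurd d.isLt (by omega)
    | succ m IH =>
      intro t d hd c
      by_cases hcase : ℓ t - m ≤ (d : ℕ)
      · exact IH t d hcase c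
      push_neg at hcase
      -- set up the polynomial
      set R : F[X] := ∏ i ∈ Finset.univ.erase t, (X - C (α i)) ^ (ℓ i) with hRdef
      have hRne : ∀ i ∈ Finset.univ.erase t, (X - C (α i)) ^ (ℓ i) ≠ 0 :=
        fun i _ => pow_ne_zero _ (Polynomial.X_sub_C_ne_zero (α i))
      have hR0 : R ≠ 0 := Finset.prod_ne_zero_iff.mpr hRne
      have hRdeg : R.natDegree = ∑ i ∈ Finset.univ.erase t, ℓ i := by
        rw [hRdef, Polynomial.natDegree_prod _ _ hRne]
        simp [Polynomial.natDegree_pow]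
      set P : F[X] := (X - C (α t)) ^ (d : ℕ) * R with hPdef
      have hsum' : ℓ t + ∑ i ∈ Finset.univ.erase t, ℓ i = ∑ i, ℓ i :=
        Finset.add_sum_erase _ ℓ (Finset.mem_univ t)
      have hPdeg : P.natDegree < k := by
        rw [hPdef, Polynomial.natDegree_mul (pow_ne_zero _ (Polynomial.X_sub_C_ne_zero _)) hR0,
          Polynomial.natDegree_pow, Polynomial.natDegree_X_sub_C, hRdeg]
        have := d.isLt
        omega
      -- evaluate T j P
      have hRval : Polynomial.eval (α t) R ≠ 0 := by
        rw [hRdef, Polynomial.eval_prod]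
        refine Finset.prod_ne_zero_iff.mpr fun i hi => ?_
        have hit : i ≠ t := Finset.ne_of_mem_erase hi
        have : α t - α i ≠ 0 := sub_ne_zero.mpr fun h => hit (hα h.symm)
        simp only [Polynomial.eval_pow, Polynomial.eval_sub, Polynomial.eval_X,
          Polynomial.eval_C]
        exact pow_ne_zero _ this
      have key : ∀ j : Fin n,
          (d : ℕ).factorial * (∑ c₂ : Fin (p t),
            v ⟨t, (d, c₂)⟩ * Polynomial.eval (α t) (R * M t j c₂)) = 0 := by
        intro j
        have h0 := hTdeg j P hPdeg
        rw [hT] at h0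
        rw [← Finset.univ_sigma_univ, Finset.sum_sigma] at h0
        rw [Finset.sum_eq_single_of_mem t (Finset.mem_univ t)] at h0
        · -- inner sum over Fin (ℓ t) × Fin (p t)
          rw [Fintype.sum_prod_type] at h0
          rw [Finset.sum_eq_single_of_mem d (Finset.mem_univ d)] at h0
          · rw [← h0, Finset.mul_sum]
            refine Finset.sum_congr rfl fun c₂ _ => ?_
            have : P * M t j c₂ = (X - C (α t)) ^ (d : ℕ) * (R * M t j c₂) := by
              rw [hPdef]; ring
            rw [this, aux_key]
            ring
          · intro d₂ _ hne
            rcases lt_trichotomy (d₂ : ℕ) (d : ℕ) with hlt | heq | hgt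
            · refine Finset.sum_eq_zero fun c₂ _ => ?_
              have : P * M t j c₂ =
                  (X - C (α t)) ^ (d : ℕ) * (R * M t j c₂) := by rw [hPdef]; ring
              rw [this, aux_vanish _ hlt, mul_zero]
            · exact absurd (Fin.ext heq) hne
            · refine Finset.sum_eq_zero fun c₂ _ => ?_
              have hv0 : v ⟨t, (d₂, c₂)⟩ = 0 := IH t d₂ (by omega) c₂
              rw [hv0, zero_mul]
        · intro i _ hit
          refine Finset.sum_eq_zero fun q => fun _ => ?_
          have hi' : i ∈ Finset.univ.erase t := Finset.mem_erase.mpr ⟨hit, Finset.mem_univ i⟩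
          have hfac : P * M i j q.2 = (X - C (α i)) ^ (ℓ i) *
              ((X - C (α t)) ^ (d : ℕ) *
                (∏ i' ∈ (Finset.univ.erase t).erase i, (X - C (α i')) ^ (ℓ i')) *
                M i j q.2) := by
            rw [hPdef, hRdef, ← Finset.mul_prod_erase _ _ hi']
            ring
          rw [hfac, aux_vanish _ q.1.isLt, mul_zero]
      -- conclude via full column rank of M t at α t
      have hker : LinearMap.ker ((M t).map (Polynomial.eval (α t))).mulVecLin = ⊥ := by
        rw [← aux_rank, hM t, Fintype.card_fin]
      have hw : ((M t).map (Polynomial.eval (α t))).mulVec (fun c₂ => v ⟨t, (d, c₂)⟩) = 0 := by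
        funext j
        have hk2 := key j
        have hfact : ((d : ℕ).factorial : F) ≠ 0 :=
          Nat.cast_ne_zero.mpr (Nat.factorial_ne_zero _)
        have h3 : (∑ c₂ : Fin (p t),
            v ⟨t, (d, c₂)⟩ * Polynomial.eval (α t) (R * M t j c₂)) = 0 := by
          rcases mul_eq_zero.mp hk2 with h | h
          · exact absurd h hfact
          · exact h
        simp only [Polynomial.eval_mul] at h3
        have h4 : Polynomial.eval (α t) R *
            (∑ c₂ : Fin (p t), v ⟨t, (d, c₂)⟩ * Polynomial.eval (α t) (M t j c₂)) = 0 := by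
          rw [Finset.mul_sum, ← h3]
          refine Finset.sum_congr rfl fun c₂ _ => ?_
          ring
        have h5 := (mul_eq_zero.mp h4).resolve_left hRval
        simp only [Matrix.mulVec, dotProduct, Matrix.map_apply, Pi.zero_apply]
        rw [← h5]
        refine Finset.sum_congr rfl fun c₂ _ => ?_
        ring
      have := (LinearMap.ker_eq_bot'.mp hker) _ (by rw [Matrix.mulVecLin_apply]; exact hw)
      exact congrFun this c
  funext c
  obtain ⟨t, d, c₂⟩ := c
  exact main (ℓ t) t d (by omega) c₂
end

section
/- Let μ ∈ 𝔽 with char(𝔽) = 0, and let h_c(x,y) = Σ_{h=0}^{c} x^{c-h} y^{h} be the c-th complete homogeneous polynomial in two variables. Then the normalized mixed partial derivative (1/a!)(1/b!) ∂^a_x ∂^b_y h_c(x,y), evaluated at x = y = μ, equals 0 if a + b > c, and equals binom(c+1, a+b+1) · μ^{c-a-b} if a + b ≤ c. In particular, it depends only on a + b. -/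
open MvPolynomial

private lemma aux_sum_range_choose (n b : ℕ) :
    ∑ h ∈ Finset.range (n + 1), h.choose b = (n + 1).choose (b + 1) := by
  rw [← Nat.sum_Icc_choose n b]
  rw [Finset.range_eq_Ico, ← Finset.Ico_add_one_right_eq_Icc]
  exact (Finset.sum_subset (Finset.Icc_subset_Icc_left (Nat.zero_le b))
    (fun x _ hx => Nat.choose_eq_zero_of_lt (by
      simp only [Finset.mem_Icc] at *; omega))).symm

private lemma aux_choose_sum (c : ℕ) : ∀ a b : ℕ,
    ∑ h ∈ Finset.range (c + 1), (c - h).choose a * h.choose b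
      = (c + 1).choose (a + b + 1) := by
  induction c with
  | zero =>
    intro a b
    cases a <;> cases b <;> simp [Nat.choose_eq_zero_of_lt]
  | succ c ih =>
    intro a b
    cases a with
    | zero =>
      simpa using aux_sum_range_choose (c + 1) b
    | succ a =>
      rw [Finset.sum_range_succ]
      have h1 : ∀ h ∈ Finset.range (c + 1),
          (c + 1 - h).choose (a + 1) * h.choose b
            = (c - h).choose a * h.choose b + (c - h).choose (a + 1) * h.choose b := by
        intro h hh
        simp only [Finset.mem_range] at hh
        have : c + 1 - h = (c - h) + 1 := by omega
        rw [this, Nat.choose_succ_succ, add_mul]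
      rw [Finset.sum_congr rfl h1, Finset.sum_add_distrib, ih a b, ih (a + 1) b]
      simp only [Nat.sub_self, Nat.choose_eq_zero_of_lt (Nat.succ_pos a), Nat.zero_mul, add_zero]
      have : a + 1 + b + 1 = (a + b + 1) + 1 := by omega
      rw [this, Nat.choose_succ_succ (c + 1) (a + b + 1)]

private lemma aux_iter_pderiv {F : Type*} [Field F] [CharZero F]
    (i : Fin 2) (q : MvPolynomial (Fin 2) F) (hq : pderiv i q = 0) (m : ℕ) :
    ∀ k : ℕ, (pderiv i)^[k] (X i ^ m * q)
      = (m.descFactorial k : MvPolynomial (Fin 2) F) * (X i ^ (m - k) * q) := by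
  intro k
  induction k with
  | zero => simp
  | succ k ih =>
    rw [Function.iterate_succ_apply', ih]
    have hc : pderiv i ((m.descFactorial k : MvPolynomial (Fin 2) F)) = 0 := by
      rw [← map_natCast (C : F →+* MvPolynomial (Fin 2) F), pderiv_C]
    rw [pderiv_mul, hc, zero_mul, zero_add, pderiv_mul, hq, mul_zero, add_zero,
      pderiv_pow, pderiv_X_self, mul_one, Nat.descFactorial_succ]
    push_cast
    ring_nf
    rw [Nat.sub_sub, Nat.add_comm 1 k]

theorem stmt4 {F : Type*} [Field F] [CharZero F] (μ : F) (a b c : ℕ) :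
    ((a.factorial * b.factorial : F))⁻¹ *
      MvPolynomial.eval (fun _ => μ)
        ((MvPolynomial.pderiv (0 : Fin 2))^[a]
          ((MvPolynomial.pderiv (1 : Fin 2))^[b]
            (∑ h ∈ Finset.range (c + 1),
              (MvPolynomial.X (0 : Fin 2) : MvPolynomial (Fin 2) F) ^ (c - h) *
                MvPolynomial.X 1 ^ h)))
      = if a + b ≤ c then ((c + 1).choose (a + b + 1) : F) * μ ^ (c - a - b) else 0 := by
  -- push iterates through the sum
  have hsum : ∀ (i : Fin 2) (k : ℕ) (s : Finset ℕ) (g : ℕ → MvPolynomial (Fin 2) F),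
      (pderiv i)^[k] (∑ h ∈ s, g h) = ∑ h ∈ s, (pderiv i)^[k] (g h) := by
    intro i k
    induction k with
    | zero => simp
    | succ k ih =>
      intro s g
      rw [Function.iterate_succ_apply', ih, map_sum]
      exact Finset.sum_congr rfl fun h _ => (Function.iterate_succ_apply' _ _ _).symm
  rw [hsum, hsum, map_sum]
  have key : ∀ h ∈ Finset.range (c + 1),
      MvPolynomial.eval (fun _ => μ)
        ((pderiv (0 : Fin 2))^[a] ((pderiv (1 : Fin 2))^[b]
          ((X (0 : Fin 2) : MvPolynomial (Fin 2) F) ^ (c - h) * X 1 ^ h)))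
      = ((c - h).descFactorial a * h.descFactorial b : F) * (μ ^ (c - h - a) * μ ^ (h - b)) := by
    intro h _
    have h1 : (pderiv (1 : Fin 2))^[b]
        ((X (0 : Fin 2) : MvPolynomial (Fin 2) F) ^ (c - h) * X 1 ^ h)
        = (h.descFactorial b : MvPolynomial (Fin 2) F) * (X 1 ^ (h - b) * X 0 ^ (c - h)) := by
      rw [show (X (0 : Fin 2) : MvPolynomial (Fin 2) F) ^ (c - h) * X 1 ^ h
          = X 1 ^ h * X 0 ^ (c - h) by ring]
      exact aux_iter_pderiv 1 (X 0 ^ (c - h)) (by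
        rw [pderiv_pow, pderiv_X_of_ne (by decide), mul_zero]) h b
    rw [h1]
    have hc0 : ∀ k : ℕ, (pderiv (0 : Fin 2))^[a]
        ((k : MvPolynomial (Fin 2) F) * (X 1 ^ (h - b) * X 0 ^ (c - h)))
        = (k : MvPolynomial (Fin 2) F) * (pderiv (0 : Fin 2))^[a]
            (X 1 ^ (h - b) * X 0 ^ (c - h)) := by
      intro k
      induction a with
      | zero => simp
      | succ a iha =>
        rw [Function.iterate_succ_apply', iha, Function.iterate_succ_apply', pderiv_mul,
          show pderiv (0 : Fin 2) ((k : MvPolynomial (Fin 2) F)) = 0 by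
            rw [← map_natCast (C : F →+* MvPolynomial (Fin 2) F), pderiv_C],
          zero_mul, zero_add]
    rw [hc0]
    have h2 : (pderiv (0 : Fin 2))^[a]
        ((X (1 : Fin 2) : MvPolynomial (Fin 2) F) ^ (h - b) * X 0 ^ (c - h))
        = ((c - h).descFactorial a : MvPolynomial (Fin 2) F)
            * (X 0 ^ (c - h - a) * X 1 ^ (h - b)) := by
      rw [show (X (1 : Fin 2) : MvPolynomial (Fin 2) F) ^ (h - b) * X 0 ^ (c - h)
          = X 0 ^ (c - h) * X 1 ^ (h - b) by ring]
      exact aux_iter_pderiv 0 (X 1 ^ (h - b)) (by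
        rw [pderiv_pow, pderiv_X_of_ne (by decide), mul_zero]) (c - h) a
    rw [h2]
    simp only [map_mul, map_pow, map_natCast, eval_X]
    ring
  rw [Finset.sum_congr rfl key]
  -- now a pure scalar computation
  have step : ∀ h ∈ Finset.range (c + 1),
      ((c - h).descFactorial a * h.descFactorial b : F) * (μ ^ (c - h - a) * μ ^ (h - b))
      = (a.factorial * b.factorial : F) *
          (((c - h).choose a * h.choose b : ℕ) * (if a + b ≤ c then μ ^ (c - a - b) else 0)) := by
    intro h hh
    simp only [Finset.mem_range] at hh
    by_cases hba : b ≤ h ∧ a ≤ c - h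
    · obtain ⟨hb, ha⟩ := hba
      have hle : a + b ≤ c := by omega
      rw [if_pos hle]
      rw [Nat.descFactorial_eq_factorial_mul_choose, Nat.descFactorial_eq_factorial_mul_choose]
      have hexp : c - h - a + (h - b) = c - a - b := by omega
      push_cast
      rw [← pow_add, hexp]
      ring
    · rcases not_and_or.mp hba with h' | h'
      · have hd : h.descFactorial b = 0 := Nat.descFactorial_eq_zero_iff_lt.mpr (by omega)
        have hz : h.choose b = 0 := Nat.choose_eq_zero_of_lt (by omega)
        rw [hd, hz]
        push_cast
        ring
      · have hd : (c - h).descFactorial a = 0 := Nat.descFactorial_eq_zero_iff_lt.mpr (by omega)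
        have hz : (c - h).choose a = 0 := Nat.choose_eq_zero_of_lt (by omega)
        rw [hd, hz]
        push_cast
        ring
  rw [Finset.sum_congr rfl step, ← Finset.mul_sum, ← Finset.sum_mul]
  rw [show ∑ h ∈ Finset.range (c + 1), (((c - h).choose a * h.choose b : ℕ) : F)
      = (((c + 1).choose (a + b + 1) : ℕ) : F) by
    rw [← Nat.cast_sum, aux_choose_sum c a b]]
  have hfac : (a.factorial * b.factorial : F) ≠ 0 := by
    exact_mod_cast Nat.mul_ne_zero a.factorial_ne_zero b.factorial_ne_zero
  rw [← mul_assoc, inv_mul_cancel₀ hfac, one_mul]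
  split <;> simp
end

section
/- Let P(z) be an m×n matrix polynomial of grade k over a field 𝔽 and v(x) = ω₁x^{k-1} + ⋯ + ω_k a scalar polynomial with coefficient vector ω ∈ 𝔽^k. Let L(z) = DL(P,v) be the km×kn pencil whose image under the block-to-bivariate bijection is B_{P,v}(x,y,z) = (P(y)(x-z)v(x) - P(x)(y-z)v(y))/(x-y). Then (V(z)ᵀ ⊗ I_m) · L(z) = ωᵀ ⊗ P(z) = P(z) · (ωᵀ ⊗ I_n), where V(z) = (z^{k-1},…,z,1)ᵀ. -/
open Polynomial Matrix

noncomputable section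

lemma aeval_C_X_eq {F : Type*} [CommSemiring F] (q : Polynomial F) :
    Polynomial.aeval (Polynomial.C Polynomial.X : Polynomial (Polynomial F)) q =
      Polynomial.C q := by
  induction q using Polynomial.induction_on' with
  | add p q hp hq => simp [hp, hq]
  | monomial n a =>
      have : (algebraMap F (Polynomial (Polynomial F))) a = Polynomial.C (Polynomial.C a) := rfl
      rw [Polynomial.aeval_monomial, ← Polynomial.C_pow, this, ← Polynomial.C_mul,
        Polynomial.C_mul_X_pow_eq_monomial]

lemma coeff_extract {R : Type*} [CommRing R] {k : ℕ} (f g : Fin k → Polynomial R)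
    (h : ∑ b : Fin k, Polynomial.C (f b) * Polynomial.X ^ (k - 1 - (b : ℕ)) =
         ∑ b : Fin k, Polynomial.C (g b) * Polynomial.X ^ (k - 1 - (b : ℕ)))
    (b : Fin k) : f b = g b := by
  have h2 := congrArg (fun p => Polynomial.coeff p (k - 1 - (b : ℕ))) h
  simp only [Polynomial.finset_sum_coeff, Polynomial.coeff_C_mul, Polynomial.coeff_X_pow] at h2
  have key : ∀ (b' : Fin k), b' ∈ Finset.univ → b' ≠ b →
      (f b') * (if (k - 1 - (b : ℕ)) = (k - 1 - (b' : ℕ)) then (1 : Polynomial R) else 0) = 0 := by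
    intro b' _ hne
    rw [if_neg, mul_zero]
    intro hEq
    apply hne
    have h1 := b'.isLt
    have h2 := b.isLt
    exact Fin.ext (by omega)
  have key' : ∀ (b' : Fin k), b' ∈ Finset.univ → b' ≠ b →
      (g b') * (if (k - 1 - (b : ℕ)) = (k - 1 - (b' : ℕ)) then (1 : Polynomial R) else 0) = 0 := by
    intro b' _ hne
    rw [if_neg, mul_zero]
    intro hEq
    apply hne
    have h1 := b'.isLt
    have h2 := b.isLt
    exact Fin.ext (by omega)
  rw [Finset.sum_eq_single b key (by simp), Finset.sum_eq_single b key' (by simp)] at h2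
  simpa using h2


/-- The `DL(P,v)` pencil, characterized via the Lerer–Tismenetsky Bézoutian identity
`(x - y) · F_L(x,y,z) = P(y)(x-z)v(x) - P(x)(y-z)v(y)`, where
`F_L(x,y,z) = ∑_{a,b} y^{k-1-a} x^{k-1-b} L_{(a,·),(b,·)}(z)` is the image of the
`k × k` block matrix `L` under the block-to-bivariate-polynomial bijection.
Variables: `X 0 = x`, `X 1 = y`, `X 2 = z`. -/
def IsDL {F : Type*} [Field F] (k : ℕ) {m n : ℕ}
    (P : Matrix (Fin m) (Fin n) (Polynomial F)) (v : Polynomial F)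
    (L : Matrix (Fin k × Fin m) (Fin k × Fin n) (Polynomial F)) : Prop :=
  ∀ (i : Fin m) (j : Fin n),
    (MvPolynomial.X 0 - MvPolynomial.X 1) *
      ∑ a : Fin k, ∑ b : Fin k,
        (MvPolynomial.X 1 : MvPolynomial (Fin 3) F) ^ (k - 1 - (a : ℕ)) *
          MvPolynomial.X 0 ^ (k - 1 - (b : ℕ)) *
          Polynomial.aeval (MvPolynomial.X 2) (L (a, i) (b, j)) =
    Polynomial.aeval (MvPolynomial.X 1) (P i j) *
        (MvPolynomial.X 0 - MvPolynomial.X 2) *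
        Polynomial.aeval (MvPolynomial.X 0) v -
      Polynomial.aeval (MvPolynomial.X 0) (P i j) *
        (MvPolynomial.X 1 - MvPolynomial.X 2) *
        Polynomial.aeval (MvPolynomial.X 1) v


theorem stmt7 {F : Type*} [Field F] (k m n : ℕ)
    (P : Matrix (Fin m) (Fin n) (Polynomial F)) (hP : ∀ i j, (P i j).natDegree ≤ k)
    (ω : Fin k → F) (v : Polynomial F)
    (hv : v = ∑ a : Fin k, C (ω a) * X ^ (k - 1 - (a : ℕ)))
    (L : Matrix (Fin k × Fin m) (Fin k × Fin n) (Polynomial F))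
    (hLdeg : ∀ r c, (L r c).natDegree ≤ 1)
    (hL : IsDL k P v L) :
    ∀ (i : Fin m) (j : Fin n) (b : Fin k),
      (∑ a : Fin k, (X : Polynomial F) ^ (k - 1 - (a : ℕ)) * L (a, i) (b, j))
          = C (ω b) * P i j ∧
      (∑ a : Fin k, (X : Polynomial F) ^ (k - 1 - (a : ℕ)) * L (a, i) (b, j))
          = P i j * C (ω b) := by
  intro i j b
  have hL := hL
  set ψ : MvPolynomial (Fin 3) F →ₐ[F] Polynomial (Polynomial F) :=
    MvPolynomial.aeval ![Polynomial.X, Polynomial.C Polynomial.X, Polynomial.C Polynomial.X]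
    with hψ
  have hψ0 : ψ (MvPolynomial.X 0) = Polynomial.X := by simp [hψ]
  have hψ1 : ψ (MvPolynomial.X 1) = Polynomial.C Polynomial.X := by simp [hψ]
  have hψ2 : ψ (MvPolynomial.X 2) = Polynomial.C Polynomial.X := by simp [hψ]
  have h0 := congrArg ψ (hL i j)
  simp only [_root_.map_mul, map_sub, map_sum, map_pow, hψ0, hψ1, hψ2,
    ← Polynomial.aeval_algHom_apply, aeval_C_X_eq] at h0
  rw [sub_self, mul_zero, zero_mul, sub_zero] at h0
  have hLHS : (∑ x : Fin k, ∑ x1 : Fin k,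
        (Polynomial.C Polynomial.X : Polynomial (Polynomial F)) ^ (k - 1 - (x : ℕ)) *
          Polynomial.X ^ (k - 1 - (x1 : ℕ)) * Polynomial.C (L (x, i) (x1, j)))
      = ∑ x1 : Fin k, Polynomial.C (∑ x : Fin k,
          (Polynomial.X : Polynomial F) ^ (k - 1 - (x : ℕ)) * L (x, i) (x1, j)) *
            Polynomial.X ^ (k - 1 - (x1 : ℕ)) := by
    rw [Finset.sum_comm]
    refine Finset.sum_congr rfl fun x1 _ => ?_
    rw [map_sum, Finset.sum_mul]
    refine Finset.sum_congr rfl fun x _ => ?_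
    rw [_root_.map_mul, map_pow]
    ring
  have hRHS : Polynomial.C (P i j) * (Polynomial.aeval (Polynomial.X : Polynomial (Polynomial F))) v
      = ∑ b' : Fin k, Polynomial.C (Polynomial.C (ω b') * P i j) *
          Polynomial.X ^ (k - 1 - (b' : ℕ)) := by
    rw [hv, map_sum, Finset.mul_sum]
    refine Finset.sum_congr rfl fun a _ => ?_
    rw [_root_.map_mul, map_pow, Polynomial.aeval_X, Polynomial.aeval_C]
    have : (algebraMap F (Polynomial (Polynomial F))) (ω a)
        = Polynomial.C (Polynomial.C (ω a)) := rfl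
    rw [this, _root_.map_mul]
    ring
  rw [hLHS, mul_right_comm, hRHS] at h0
  have hne : (Polynomial.X - Polynomial.C Polynomial.X : Polynomial (Polynomial F)) ≠ 0 :=
    Polynomial.X_sub_C_ne_zero Polynomial.X
  rw [mul_comm (∑ b' : Fin k, _ * _) (Polynomial.X - Polynomial.C Polynomial.X)] at h0
  have h1 := mul_left_cancel₀ hne h0
  have h2 := coeff_extract _ _ h1 b
  exact ⟨h2, h2.trans (mul_comm _ _)⟩


end
end

section
/- Let P(z) be an m×n matrix polynomial of grade k, v an ansatz polynomial of grade k-1 with coefficient vector ω ∈ 𝔽^k, and L(z) = DL(P,v). Then L(z)(V(z) ⊗ I_n) = ω ⊗ P(z) = (ω ⊗ I_m)P(z), where V(z) = (z^{k-1},…,z,1)ᵀ. Consequently, if M(z) ∈ 𝔽[z]^{n×p} satisfies P(z)M(z) = 0, then L(z)(V(z) ⊗ M(z)) = 0. -/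
open Polynomial Matrix

noncomputable section

private lemma aeval_C_X_helper {R : Type*} [CommRing R] (q : Polynomial R) :
    Polynomial.aeval (Polynomial.C (Polynomial.X : Polynomial R)) q = Polynomial.C q := by
  induction q using Polynomial.induction_on' with
  | add p q hp hq => rw [map_add, map_add, hp, hq]
  | monomial nn a =>
    rw [Polynomial.aeval_monomial, ← Polynomial.C_pow, Polynomial.algebraMap_apply,
      ← Polynomial.C_mul]
    simp [Polynomial.algebraMap_apply, Algebra.algebraMap_self_apply,
      Polynomial.C_mul_X_pow_eq_monomial]

theorem stmt8 {F : Type*} [Field F] (k m n : ℕ)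
    (P : Matrix (Fin m) (Fin n) (Polynomial F)) (hP : ∀ i j, (P i j).natDegree ≤ k)
    (ω : Fin k → F) (v : Polynomial F)
    (hv : v = ∑ a : Fin k, C (ω a) * X ^ (k - 1 - (a : ℕ)))
    (L : Matrix (Fin k × Fin m) (Fin k × Fin n) (Polynomial F))
    (hLdeg : ∀ r c, (L r c).natDegree ≤ 1)
    (hL : IsDL k P v L) :
    (∀ (a : Fin k) (i : Fin m) (j : Fin n),
      (∑ b : Fin k, L (a, i) (b, j) * (X : Polynomial F) ^ (k - 1 - (b : ℕ)))
          = C (ω a) * P i j ∧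
      (∑ b : Fin k, L (a, i) (b, j) * (X : Polynomial F) ^ (k - 1 - (b : ℕ)))
          = P i j * C (ω a)) ∧
    ∀ (p : ℕ) (M : Matrix (Fin n) (Fin p) (Polynomial F)), P * M = 0 →
      ∀ (a : Fin k) (i : Fin m) (c : Fin p),
        ∑ bj : Fin k × Fin n,
          L (a, i) bj * ((X : Polynomial F) ^ (k - 1 - (bj.1 : ℕ)) * M bj.2 c) = 0 := by
  subst hv
  -- the substitution map x ↦ C X (i.e. z), y ↦ X, z ↦ C X
  set f : Fin 3 → Polynomial (Polynomial F) :=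
    fun i => if i = 1 then Polynomial.X else Polynomial.C Polynomial.X with hf
  have hf0 : f 0 = Polynomial.C Polynomial.X := rfl
  have hf1 : f 1 = Polynomial.X := rfl
  have hf2 : f 2 = Polynomial.C Polynomial.X := rfl
  have hne : (Polynomial.C (Polynomial.X : Polynomial F)
      - Polynomial.X : Polynomial (Polynomial F)) ≠ 0 := by
    intro h
    have h0 := congrArg (fun p => Polynomial.coeff p 0) h
    simp at h0
  have key : ∀ (a : Fin k) (i : Fin m) (j : Fin n),
      (∑ b : Fin k, L (a, i) (b, j) * (X : Polynomial F) ^ (k - 1 - (b : ℕ)))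
        = C (ω a) * P i j := by
    intro a i j
    have h2 := congrArg (⇑(MvPolynomial.aeval f)) (hL i j)
    simp only [map_sub, _root_.map_mul, map_sum, _root_.map_pow, MvPolynomial.aeval_X,
      ← Polynomial.aeval_algHom_apply, hf0, hf1, hf2, aeval_C_X_helper,
      sub_self, mul_zero, zero_mul, zero_sub] at h2
    simp only [map_sum, _root_.map_mul, _root_.map_pow, Polynomial.aeval_C, Polynomial.aeval_X,
      Polynomial.algebraMap_apply, Algebra.algebraMap_self_apply] at h2
    -- h2 should now be of the form (C X - X) * A = -(C P * (X - C X) * S)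
    have h3 : (Polynomial.C Polynomial.X - Polynomial.X) *
        (∑ a' : Fin k, ∑ b : Fin k,
          Polynomial.X ^ (k - 1 - (a' : ℕ)) * Polynomial.C Polynomial.X ^ (k - 1 - (b : ℕ)) *
            Polynomial.C (L (a', i) (b, j))) =
        (Polynomial.C Polynomial.X - Polynomial.X) *
        (Polynomial.C (P i j) *
          ∑ a' : Fin k, Polynomial.C (Polynomial.C (ω a')) * Polynomial.X ^ (k - 1 - (a' : ℕ))) := by
      linear_combination h2
    have hA := mul_left_cancel₀ hne h3
    have hA2 : (∑ a' : Fin k,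
          Polynomial.C (∑ b : Fin k, L (a', i) (b, j) * (X : Polynomial F) ^ (k - 1 - (b : ℕ))) *
            Polynomial.X ^ (k - 1 - (a' : ℕ)))
        = ∑ a' : Fin k, Polynomial.C (C (ω a') * P i j) * Polynomial.X ^ (k - 1 - (a' : ℕ)) := by
      calc (∑ a' : Fin k,
          Polynomial.C (∑ b : Fin k, L (a', i) (b, j) * (X : Polynomial F) ^ (k - 1 - (b : ℕ))) *
            Polynomial.X ^ (k - 1 - (a' : ℕ)))
          = ∑ a' : Fin k, ∑ b : Fin k,
            Polynomial.X ^ (k - 1 - (a' : ℕ)) * Polynomial.C Polynomial.X ^ (k - 1 - (b : ℕ)) *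
              Polynomial.C (L (a', i) (b, j)) := by
            refine Finset.sum_congr rfl fun a' _ => ?_
            simp only [map_sum, _root_.map_mul, _root_.map_pow, Finset.sum_mul]
            exact Finset.sum_congr rfl fun b _ => by ring
        _ = Polynomial.C (P i j) *
            ∑ a' : Fin k, Polynomial.C (Polynomial.C (ω a')) * Polynomial.X ^ (k - 1 - (a' : ℕ)) := hA
        _ = ∑ a' : Fin k, Polynomial.C (C (ω a') * P i j) * Polynomial.X ^ (k - 1 - (a' : ℕ)) := by
            rw [Finset.mul_sum]
            refine Finset.sum_congr rfl fun a' _ => ?_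
            rw [_root_.map_mul]; ring
    have h4 := congrArg (fun p => Polynomial.coeff p (k - 1 - (a : ℕ))) hA2
    have coeffeq : ∀ q : Fin k → Polynomial F,
        (∑ a' : Fin k, Polynomial.C (q a') * Polynomial.X ^ (k - 1 - (a' : ℕ))).coeff
          (k - 1 - (a : ℕ)) = q a := by
      intro q
      rw [Polynomial.finset_sum_coeff, Finset.sum_eq_single a]
      · simp [Polynomial.coeff_C_mul, Polynomial.coeff_X_pow]
      · intro b _ hb
        have hbk := b.isLt
        have hak := a.isLt
        have hab : (k - 1 - (a : ℕ)) ≠ (k - 1 - (b : ℕ)) := by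
          have : (a : ℕ) ≠ (b : ℕ) := fun h => hb (Fin.ext h.symm)
          omega
        simp [Polynomial.coeff_C_mul, Polynomial.coeff_X_pow, hab]
      · simp
    simpa only [coeffeq] using h4
  refine ⟨fun a i j => ⟨key a i j, by rw [key a i j, mul_comm]⟩, ?_⟩
  intro p M hM a i c
  have h0 : (∑ j, P i j * M j c) = 0 := by
    have := congrFun (congrFun hM i) c
    simpa [Matrix.mul_apply] using this
  rw [Fintype.sum_prod_type, Finset.sum_comm]
  calc (∑ j : Fin n, ∑ b : Fin k,
        L (a, i) (b, j) * ((X : Polynomial F) ^ (k - 1 - (b : ℕ)) * M j c))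
      = ∑ j : Fin n, (∑ b : Fin k, L (a, i) (b, j) * (X : Polynomial F) ^ (k - 1 - (b : ℕ))) *
          M j c := by
        refine Finset.sum_congr rfl fun j _ => ?_
        rw [Finset.sum_mul]
        exact Finset.sum_congr rfl fun b _ => by ring
    _ = ∑ j : Fin n, C (ω a) * (P i j * M j c) := by
        refine Finset.sum_congr rfl fun j _ => ?_
        rw [key a i j]; ring
    _ = C (ω a) * ∑ j, P i j * M j c := by rw [Finset.mul_sum]
    _ = 0 := by rw [h0, mul_zero]


end
end

section
/- For any m×n matrix polynomial P(z) of grade k and any scalar ansatz polynomial v of grade k-1, the transpose of the DL pencil satisfies (DL(P,v))ᵀ = DL(Pᵀ, v). In particular, when m = n, every pencil in DL(P) is block symmetric. -/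
open Polynomial Matrix

noncomputable section

lemma rename_swap_aeval {F : Type*} [Field F] (p : Polynomial F) (t : Fin 3) :
    MvPolynomial.rename (Equiv.swap (0 : Fin 3) 1)
        (Polynomial.aeval (MvPolynomial.X t : MvPolynomial (Fin 3) F) p)
      = Polynomial.aeval (MvPolynomial.X (Equiv.swap (0 : Fin 3) 1 t) : MvPolynomial (Fin 3) F) p := by
  have hcomp : (MvPolynomial.rename (Equiv.swap (0 : Fin 3) 1)).comp
      (Polynomial.aeval (MvPolynomial.X t) : Polynomial F →ₐ[F] MvPolynomial (Fin 3) F) =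
      Polynomial.aeval (MvPolynomial.X (Equiv.swap (0 : Fin 3) 1 t)) := by
    apply Polynomial.algHom_ext
    simp
  exact AlgHom.congr_fun hcomp p

theorem stmt9 {F : Type*} [Field F] (k m n : ℕ)
    (P : Matrix (Fin m) (Fin n) (Polynomial F)) (hP : ∀ i j, (P i j).natDegree ≤ k)
    (v : Polynomial F) (hv : v.natDegree ≤ k - 1)
    (L : Matrix (Fin k × Fin m) (Fin k × Fin n) (Polynomial F))
    (hLdeg : ∀ r c, (L r c).natDegree ≤ 1)
    (hL : IsDL k P v L) :
    IsDL k P.transpose v L.transpose ∧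
    ∀ (a b : Fin k) (i : Fin m) (j : Fin n), L (a, i) (b, j) = L (b, i) (a, j) := by
  have hsym : ∀ (a b : Fin k) (i : Fin m) (j : Fin n), L (a, i) (b, j) = L (b, i) (a, j) := by
    intro a0 b0 i j
    have h := hL i j
    have hσ0 : Equiv.swap (0 : Fin 3) 1 0 = 1 := Equiv.swap_apply_left 0 1
    have hσ1 : Equiv.swap (0 : Fin 3) 1 1 = 0 := Equiv.swap_apply_right 0 1
    have hσ2 : Equiv.swap (0 : Fin 3) 1 2 = 2 :=
      Equiv.swap_apply_of_ne_of_ne (by decide) (by decide)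
    have h2 := congrArg (MvPolynomial.rename (Equiv.swap (0 : Fin 3) 1)) h
    simp only [_root_.map_mul, map_sub, map_sum, map_pow, MvPolynomial.rename_X,
      rename_swap_aeval, hσ0, hσ1, hσ2] at h2
    -- h2 : (X1 - X0) * ∑ a, ∑ b, X0^(k-1-a) * X1^(k-1-b) * aeval X2 (L (a,i) (b,j)) = ...
    have hc : (MvPolynomial.X 0 - MvPolynomial.X 1 : MvPolynomial (Fin 3) F) ≠ 0 := by
      intro hx
      have : (MvPolynomial.X 0 : MvPolynomial (Fin 3) F) = MvPolynomial.X 1 :=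
        sub_eq_zero.mp hx
      have := MvPolynomial.X_injective this
      exact absurd this (by decide)
    have hS : (∑ a : Fin k, ∑ b : Fin k,
          (MvPolynomial.X 1 : MvPolynomial (Fin 3) F) ^ (k - 1 - (a : ℕ)) *
            MvPolynomial.X 0 ^ (k - 1 - (b : ℕ)) *
            Polynomial.aeval (MvPolynomial.X 2) (L (a, i) (b, j))) =
        ∑ a : Fin k, ∑ b : Fin k,
          (MvPolynomial.X 1 : MvPolynomial (Fin 3) F) ^ (k - 1 - (a : ℕ)) *
            MvPolynomial.X 0 ^ (k - 1 - (b : ℕ)) *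
            Polynomial.aeval (MvPolynomial.X 2) (L (b, i) (a, j)) := by
      apply mul_left_cancel₀ hc
      rw [h]
      have hT : (∑ a : Fin k, ∑ b : Fin k,
            (MvPolynomial.X 1 : MvPolynomial (Fin 3) F) ^ (k - 1 - (a : ℕ)) *
              MvPolynomial.X 0 ^ (k - 1 - (b : ℕ)) *
              Polynomial.aeval (MvPolynomial.X 2) (L (b, i) (a, j))) =
          ∑ a : Fin k, ∑ b : Fin k,
            (MvPolynomial.X 0 : MvPolynomial (Fin 3) F) ^ (k - 1 - (a : ℕ)) *
              MvPolynomial.X 1 ^ (k - 1 - (b : ℕ)) *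
              Polynomial.aeval (MvPolynomial.X 2) (L (a, i) (b, j)) := by
        rw [Finset.sum_comm]
        exact Finset.sum_congr rfl fun a _ => Finset.sum_congr rfl fun b _ => by ring
      rw [hT]
      linear_combination h2
    -- now extract coefficients via a map to MvPolynomial (Fin 2) (Polynomial F)
    set φ : MvPolynomial (Fin 3) F →ₐ[F] MvPolynomial (Fin 2) (Polynomial F) :=
      MvPolynomial.aeval ![MvPolynomial.X 0, MvPolynomial.X 1, MvPolynomial.C Polynomial.X]
      with hφdef
    have hφ0 : φ (MvPolynomial.X 0) = MvPolynomial.X 0 := by simp [hφdef]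
    have hφ1 : φ (MvPolynomial.X 1) = MvPolynomial.X 1 := by simp [hφdef]
    have hφa : ∀ q : Polynomial F,
        φ (Polynomial.aeval (MvPolynomial.X 2) q) = MvPolynomial.C q := by
      intro q
      have hcomp : φ.comp
          (Polynomial.aeval (MvPolynomial.X 2) : Polynomial F →ₐ[F] MvPolynomial (Fin 3) F) =
          IsScalarTower.toAlgHom F (Polynomial F) (MvPolynomial (Fin 2) (Polynomial F)) := by
        apply Polynomial.algHom_ext
        simp [hφdef, MvPolynomial.algebraMap_eq]
      have := AlgHom.congr_fun hcomp q
      simpa [IsScalarTower.toAlgHom_apply, MvPolynomial.algebraMap_eq] using this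
    have h3 := congrArg φ hS
    simp only [map_sum, _root_.map_mul, map_pow, hφ0, hφ1, hφa] at h3
    simp only [MvPolynomial.X_pow_eq_monomial, MvPolynomial.C_apply,
      MvPolynomial.monomial_mul, one_mul, add_zero] at h3
    have h4 := congrArg (MvPolynomial.coeff
      (Finsupp.single (1 : Fin 2) (k - 1 - (a0 : ℕ)) +
        Finsupp.single (0 : Fin 2) (k - 1 - (b0 : ℕ)))) h3
    simp only [MvPolynomial.coeff_sum, MvPolynomial.coeff_monomial] at h4
    have hcond : ∀ a b : Fin k,
        (Finsupp.single (1 : Fin 2) (k - 1 - (a : ℕ)) +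
            Finsupp.single (0 : Fin 2) (k - 1 - (b : ℕ)) =
          Finsupp.single (1 : Fin 2) (k - 1 - (a0 : ℕ)) +
            Finsupp.single (0 : Fin 2) (k - 1 - (b0 : ℕ))) ↔ a = a0 ∧ b = b0 := by
      intro a b
      constructor
      · intro hEq
        have h1 : k - 1 - (a : ℕ) = k - 1 - (a0 : ℕ) := by
          have := DFunLike.congr_fun hEq 1
          simpa [Finsupp.add_apply, Finsupp.single_apply] using this
        have h0 : k - 1 - (b : ℕ) = k - 1 - (b0 : ℕ) := by
          have := DFunLike.congr_fun hEq 0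
          simpa [Finsupp.add_apply, Finsupp.single_apply] using this
        have ha := a.isLt; have ha0 := a0.isLt; have hb := b.isLt; have hb0 := b0.isLt
        exact ⟨Fin.ext (by omega), Fin.ext (by omega)⟩
      · rintro ⟨rfl, rfl⟩; rfl
    simp only [hcond, ite_and] at h4
    simpa using h4
  refine ⟨?_, hsym⟩
  intro i j
  simp only [Matrix.transpose_apply]
  have hsum : (∑ a : Fin k, ∑ b : Fin k,
        (MvPolynomial.X 1 : MvPolynomial (Fin 3) F) ^ (k - 1 - (a : ℕ)) *
          MvPolynomial.X 0 ^ (k - 1 - (b : ℕ)) *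
          Polynomial.aeval (MvPolynomial.X 2) (L (b, j) (a, i))) =
      ∑ a : Fin k, ∑ b : Fin k,
        (MvPolynomial.X 1 : MvPolynomial (Fin 3) F) ^ (k - 1 - (a : ℕ)) *
          MvPolynomial.X 0 ^ (k - 1 - (b : ℕ)) *
          Polynomial.aeval (MvPolynomial.X 2) (L (a, j) (b, i)) :=
    Finset.sum_congr rfl fun a _ => Finset.sum_congr rfl fun b _ => by rw [hsym b a j i]
  rw [hsum]
  exact hL j i

end
end

section
/- Let P(z) ∈ 𝔽[z]^{m×n} have grade k and v(z) be an ansatz polynomial of grade k-1. Let r(z) = n(z)/d(z) be a Möbius function with n(z) = αz+β, d(z) = γz+δ coprime linear polynomials. Set Q(z) = d(z)^k P(n(z)/d(z)) and u(z) = d(z)^{k-1} v(n(z)/d(z)). Let L(z) = DL(P,v) and M(z) = DL(Q,u), and let B ∈ 𝔽^{k×k} be the invertible matrix with B·(z^{k-1},…,z,1)ᵀ = (n(z)^{k-1}, n(z)^{k-2}d(z), …, d(z)^{k-1})ᵀ. Then (Bᵀ ⊗ I_m) · d(z)·L(n(z)/d(z)) · (B ⊗ I_n) = M(z). -/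
open Polynomial Matrix

noncomputable section

/-- The Möbius transform of grade `g` of a polynomial `p` induced by
`r(z) = (α z + β)/(γ z + δ)`: `M_{g,r}(p)(z) = (γ z + δ)^g · p((α z + β)/(γ z + δ))`. -/
def mobius {F : Type*} [Field F] (α β γ δ : F) (g : ℕ) (p : Polynomial F) : Polynomial F :=
  ∑ t ∈ Finset.range (g + 1),
    C (p.coeff t) * (C α * X + C β) ^ t * (C γ * X + C δ) ^ (g - t)

/-!
Substituting `x, y, z ↦ r(x), r(y), r(z)` into the Bézoutian identity defining `L = DL(P, v)` and
clearing the denominators `d(x)^k d(y)^k d(z)` gives the identity defining `DL(Q, u)` for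
`(Bᵀ ⊗ I) · d(z) L(r(z)) · (B ⊗ I)`, because `B (t^(k-1), …, 1)ᵀ = d(t)^(k-1) (r(t)^(k-1), …, 1)ᵀ`
and `r(x) - r(y) = (αδ - βγ)(x - y) / (d(x) d(y))` with `αδ - βγ ≠ 0`.
The substitution is performed in the fraction field of `F[x, y, z]`, where `d` does not vanish.
Since the identity determines the pencil (cancel `x - y` and read off coefficients), this matrix
is `M`.
-/

section BivariateForm

variable {F K : Type*} [CommSemiring F] [CommRing K] (φ : F →+* K) {k : ℕ}

def powerVec (k : ℕ) (t : K) : Fin k → K := fun a => t ^ (k - 1 - (a : ℕ))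

def bivariateForm (A : Matrix (Fin k) (Fin k) F[X]) (x y z : K) : K :=
  powerVec k y ⬝ᵥ A.map (eval₂ φ z) *ᵥ powerVec k x

def dlRhs (p v : F[X]) (x y z : K) : K :=
  eval₂ φ y p * (x - z) * eval₂ φ x v - eval₂ φ x p * (y - z) * eval₂ φ y v

theorem bivariateForm_eq_sum (A : Matrix (Fin k) (Fin k) F[X]) (x y z : K) :
    bivariateForm φ A x y z
      = ∑ a : Fin k, ∑ b : Fin k, y ^ (k - 1 - (a : ℕ)) * x ^ (k - 1 - (b : ℕ)) * eval₂ φ z (A a b) := by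
  simp only [bivariateForm, powerVec, dotProduct, mulVec, map_apply, Finset.mul_sum]
  exact Finset.sum_congr rfl fun a _ => Finset.sum_congr rfl fun b _ => by ring

theorem map_bivariateForm {K' : Type*} [CommRing K'] (f : K →+* K')
    (A : Matrix (Fin k) (Fin k) F[X]) (x y z : K) :
    f (bivariateForm φ A x y z) = bivariateForm (f.comp φ) A (f x) (f y) (f z) := by
  simp [bivariateForm, powerVec, dotProduct, mulVec, hom_eval₂]

theorem map_dlRhs {K' : Type*} [CommRing K'] (f : K →+* K') (p v : F[X]) (x y z : K) :
    f (dlRhs φ p v x y z) = dlRhs (f.comp φ) p v (f x) (f y) (f z) := by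
  simp [dlRhs, hom_eval₂]

end BivariateForm

def IsMobiusBasisChange {F : Type*} [Field F] (α β γ δ : F) {k : ℕ} (B : Matrix (Fin k) (Fin k) F) :
    Prop :=
  ∀ i : Fin k, ∑ j : Fin k, C (B i j) * X ^ (k - 1 - (j : ℕ))
    = (C α * X + C β) ^ (k - 1 - (i : ℕ)) * (C γ * X + C δ) ^ (i : ℕ)

section Mobius

variable {F K : Type*} [Field F] [Field K] (φ : F →+* K) (α β γ δ : F)

-- `𝔡 t = d(t)` and `𝔯 t = r(t) = n(t) / d(t)`, with the coefficients mapped into `K` by `φ`.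
local notation "𝔡" t:max => φ γ * t + φ δ
local notation "𝔯" t:max => (φ α * t + φ β) / (φ γ * t + φ δ)

theorem eval₂_mobius {g : ℕ} {p : F[X]} (hp : p.natDegree ≤ g) {t : K} (ht : 𝔡 t ≠ 0) :
    eval₂ φ t (mobius α β γ δ g p) = (𝔡 t) ^ g * eval₂ φ (𝔯 t) p := by
  rw [eval₂_eq_sum_range' φ (Nat.lt_succ_of_le hp), mobius, eval₂_finsetSum, Finset.mul_sum]
  refine Finset.sum_congr rfl fun i hi => ?_
  simp only [eval₂_mul, eval₂_pow, eval₂_add, eval₂_C, eval₂_X]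
  rw [div_pow, ← pow_mul_pow_sub _ (Nat.lt_succ_iff.mp (Finset.mem_range.mp hi)), mul_div_assoc',
    mul_div_assoc', eq_div_iff (pow_ne_zero i ht)]
  ring

theorem mobius_sub_mul {s t : K} (hs : 𝔡 s ≠ 0) (ht : 𝔡 t ≠ 0) :
    (𝔯 s - 𝔯 t) * ((𝔡 s) * 𝔡 t) = φ (α * δ - β * γ) * (s - t) := by
  rw [div_sub_div _ _ hs ht, div_mul_cancel₀ _ (mul_ne_zero hs ht), map_sub, map_mul, map_mul]
  ring

variable {α β γ δ}

theorem IsMobiusBasisChange.mulVec_powerVec {k : ℕ} {B : Matrix (Fin k) (Fin k) F}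
    (hB : IsMobiusBasisChange α β γ δ B) {t : K} (ht : 𝔡 t ≠ 0) :
    B.map φ *ᵥ powerVec k t = (𝔡 t) ^ (k - 1) • powerVec k (𝔯 t) := by
  ext i
  have hBt := congrArg (eval₂ φ t) (hB i)
  simp only [eval₂_finsetSum, eval₂_mul, eval₂_pow, eval₂_add, eval₂_C, eval₂_X] at hBt
  simp only [mulVec, dotProduct, map_apply, powerVec, Pi.smul_apply, smul_eq_mul, hBt]
  rw [div_pow, ← pow_mul_pow_sub _ (Nat.le_sub_one_of_lt i.2), mul_div_assoc',
    eq_div_iff (pow_ne_zero _ ht)]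
  ring

theorem IsMobiusBasisChange.bivariateForm_mobius {k : ℕ} {B : Matrix (Fin k) (Fin k) F}
    (hB : IsMobiusBasisChange α β γ δ B)
    {A : Matrix (Fin k) (Fin k) F[X]} (hA : ∀ a b, (A a b).natDegree ≤ 1)
    {x y z : K} (hx : 𝔡 x ≠ 0) (hy : 𝔡 y ≠ 0) (hz : 𝔡 z ≠ 0) :
    bivariateForm φ ((B.map C)ᵀ * A.map (mobius α β γ δ 1) * B.map C) x y z
      = (𝔡 x) ^ (k - 1) * (𝔡 y) ^ (k - 1) * 𝔡 z * bivariateForm φ A (𝔯 x) (𝔯 y) (𝔯 z) := by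
  have hBC : (B.map C).map (eval₂ φ z) = B.map φ := by
    ext; simp
  have hAz : (A.map (mobius α β γ δ 1)).map (eval₂ φ z) = 𝔡 z • A.map (eval₂ φ (𝔯 z)) := by
    ext a b; simp [eval₂_mobius φ α β γ δ (hA a b) hz]
  have hmap : ((B.map C)ᵀ * A.map (mobius α β γ δ 1) * B.map C).map (eval₂ φ z)
      = (B.map φ)ᵀ * (𝔡 z • A.map (eval₂ φ (𝔯 z))) * B.map φ := by
    rw [← coe_eval₂RingHom, Matrix.map_mul, Matrix.map_mul, transpose_map, coe_eval₂RingHom,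
      hBC, hAz]
  rw [bivariateForm, hmap, ← mulVec_mulVec, ← mulVec_mulVec, dotProduct_mulVec, vecMul_transpose,
    hB.mulVec_powerVec φ hx, hB.mulVec_powerVec φ hy, bivariateForm]
  simp only [smul_mulVec, mulVec_smul, smul_dotProduct, dotProduct_smul, smul_eq_mul]
  ring

theorem dlRhs_mobius {k : ℕ} (hk : 0 < k) {p v : F[X]} (hp : p.natDegree ≤ k)
    (hv : v.natDegree ≤ k - 1) {x y z : K} (hx : 𝔡 x ≠ 0) (hy : 𝔡 y ≠ 0) (hz : 𝔡 z ≠ 0) :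
    φ (α * δ - β * γ) * dlRhs φ (mobius α β γ δ k p) (mobius α β γ δ (k - 1) v) x y z
      = 𝔡 x * 𝔡 y * ((𝔡 x) ^ (k - 1) * (𝔡 y) ^ (k - 1) * 𝔡 z) * dlRhs φ p v (𝔯 x) (𝔯 y) (𝔯 z) := by
  have hpow (w : K) : w ^ k = w ^ (k - 1) * w := (pow_sub_one_mul hk.ne' w).symm
  rw [dlRhs, dlRhs, eval₂_mobius φ α β γ δ hp hx, eval₂_mobius φ α β γ δ hp hy,
    eval₂_mobius φ α β γ δ hv hx, eval₂_mobius φ α β γ δ hv hy, hpow, hpow]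
  linear_combination
    (eval₂ φ (𝔯 x) p * eval₂ φ (𝔯 y) v * (𝔡 x) ^ (k - 1) * 𝔡 x * (𝔡 y) ^ (k - 1)) *
        mobius_sub_mul φ α β γ δ hy hz -
      (eval₂ φ (𝔯 y) p * eval₂ φ (𝔯 x) v * (𝔡 y) ^ (k - 1) * 𝔡 y * (𝔡 x) ^ (k - 1)) *
        mobius_sub_mul φ α β γ δ hx hz

theorem IsMobiusBasisChange.dl_identity_mobius (hcop : α * δ - β * γ ≠ 0) {k : ℕ} (hk : 0 < k)
    {B : Matrix (Fin k) (Fin k) F} (hB : IsMobiusBasisChange α β γ δ B)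
    {A : Matrix (Fin k) (Fin k) F[X]} (hA : ∀ a b, (A a b).natDegree ≤ 1)
    {p v : F[X]} (hp : p.natDegree ≤ k) (hv : v.natDegree ≤ k - 1)
    {x y z : K} (hx : 𝔡 x ≠ 0) (hy : 𝔡 y ≠ 0) (hz : 𝔡 z ≠ 0)
    (h : (𝔯 x - 𝔯 y) * bivariateForm φ A (𝔯 x) (𝔯 y) (𝔯 z) = dlRhs φ p v (𝔯 x) (𝔯 y) (𝔯 z)) :
    (x - y) * bivariateForm φ ((B.map C)ᵀ * A.map (mobius α β γ δ 1) * B.map C) x y z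
      = dlRhs φ (mobius α β γ δ k p) (mobius α β γ δ (k - 1) v) x y z := by
  apply mul_left_cancel₀ ((map_ne_zero φ).mpr hcop)
  rw [hB.bivariateForm_mobius φ hA hx hy hz, dlRhs_mobius φ hk hp hv hx hy hz, ← h]
  linear_combination (-((𝔡 x) ^ (k - 1) * (𝔡 y) ^ (k - 1) * 𝔡 z *
    bivariateForm φ A (𝔯 x) (𝔯 y) (𝔯 z))) * mobius_sub_mul φ α β γ δ hx hy

end Mobius

theorem MvPolynomial.C_mul_X_add_C_ne_zero {σ R : Type*} [CommRing R] {γ δ : R}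
    (h : γ ≠ 0 ∨ δ ≠ 0) (t : σ) : (C γ * X t + C δ : MvPolynomial σ R) ≠ 0 := by
  intro h0
  have h₀ := congrArg (eval fun _ => 0) h0
  have h₁ := congrArg (eval fun _ => 1) h0
  simp only [map_add, map_mul, eval_C, eval_X, mul_zero, zero_add, mul_one, map_zero] at h₀ h₁
  rw [h₀, add_zero] at h₁
  exact h.elim (· h₁) (· h₀)

theorem Polynomial.coeff_sum_C_mul_X_pow_rev {R : Type*} [Semiring R] {k : ℕ} (g : Fin k → R)
    (a : Fin k) : (∑ b : Fin k, C (g b) * X ^ (k - 1 - (b : ℕ))).coeff (k - 1 - (a : ℕ)) = g a := by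
  rw [finsetSum_coeff, Finset.sum_eq_single_of_mem a (Finset.mem_univ a)]
  · simp
  · intro b _ hba
    rw [coeff_C_mul_X_pow, if_neg]
    intro h
    exact hba (Fin.ext (by omega))

theorem Matrix.transpose_mul_mul_apply {n R : Type*} [Fintype n] [CommSemiring R]
    (A N B : Matrix n n R) (a b : n) :
    (Aᵀ * N * B) a b = ∑ a', ∑ b', A a' a * B b' b * N a' b' := by
  simp only [mul_apply, transpose_apply, Finset.sum_mul]
  rw [Finset.sum_comm]
  exact Finset.sum_congr rfl fun a' _ => Finset.sum_congr rfl fun b' _ => by ring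

section Trivariate

variable {F : Type*} [Field F]

local notation "𝕏" i:max => (MvPolynomial.X i : MvPolynomial (Fin 3) F)

theorem isDL_iff {k m n : ℕ} {P : Matrix (Fin m) (Fin n) F[X]} {v : F[X]}
    {L : Matrix (Fin k × Fin m) (Fin k × Fin n) F[X]} :
    IsDL k P v L ↔ ∀ i j,
      (𝕏 0 - 𝕏 1) * bivariateForm MvPolynomial.C (of fun a b => L (a, i) (b, j)) (𝕏 0) (𝕏 1) (𝕏 2)
        = dlRhs MvPolynomial.C (P i j) v (𝕏 0) (𝕏 1) (𝕏 2) := by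
  simp only [IsDL, bivariateForm_eq_sum, dlRhs, aeval_def, MvPolynomial.algebraMap_eq, of_apply]

theorem bivariateForm_injective {k : ℕ} :
    Function.Injective fun A : Matrix (Fin k) (Fin k) F[X] =>
      bivariateForm MvPolynomial.C A (𝕏 0) (𝕏 1) (𝕏 2) := by
  intro A A' h
  -- `x ↦ Y`, `y ↦ Z`, `z ↦ T` into `F[T][Y][Z]`, where the blocks are iterated coefficients
  let ψ : MvPolynomial (Fin 3) F →+* F[X][X][X] :=
    MvPolynomial.eval₂Hom ((C.comp C).comp C) (![C X, X, C (C X)] : Fin 3 → F[X][X][X])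
  have hψ (N : Matrix (Fin k) (Fin k) F[X]) :
      ψ (bivariateForm MvPolynomial.C N (𝕏 0) (𝕏 1) (𝕏 2))
        = ∑ a : Fin k, C (∑ b : Fin k, C (N a b) * X ^ (k - 1 - (b : ℕ))) * X ^ (k - 1 - (a : ℕ)) := by
    rw [map_bivariateForm (K' := F[X][X][X]), bivariateForm_eq_sum]
    have hz (q : F[X]) : eval₂ ((C.comp C).comp C) (C (C X)) q = C (C q) := by
      simpa only [eval₂_C_X, RingHom.comp_apply] using (hom_eval₂ q C (C.comp C) X).symm
    simp only [ψ, MvPolynomial.eval₂Hom_comp_C, MvPolynomial.eval₂Hom_X', Matrix.cons_val, hz,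
      map_sum, Finset.sum_mul, map_mul, map_pow]
    exact Finset.sum_congr rfl fun a _ => Finset.sum_congr rfl fun b _ => by ring
  have hψAA' := congrArg ψ h
  simp only [hψ] at hψAA'
  refine Matrix.ext fun a b => ?_
  simpa only [coeff_sum_C_mul_X_pow_rev] using
    congrArg (fun q => (q.coeff (k - 1 - (a : ℕ))).coeff (k - 1 - (b : ℕ))) hψAA'

variable {α β γ δ : F}

theorem IsMobiusBasisChange.dl_identity_mobius_polynomial (hcop : α * δ - β * γ ≠ 0) {k : ℕ}
    (hk : 0 < k) {B : Matrix (Fin k) (Fin k) F} (hB : IsMobiusBasisChange α β γ δ B)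
    {A : Matrix (Fin k) (Fin k) F[X]} (hA : ∀ a b, (A a b).natDegree ≤ 1)
    {p v : F[X]} (hp : p.natDegree ≤ k) (hv : v.natDegree ≤ k - 1)
    (h : (𝕏 0 - 𝕏 1) * bivariateForm MvPolynomial.C A (𝕏 0) (𝕏 1) (𝕏 2)
      = dlRhs MvPolynomial.C p v (𝕏 0) (𝕏 1) (𝕏 2)) :
    (𝕏 0 - 𝕏 1) * bivariateForm MvPolynomial.C ((B.map C)ᵀ * A.map (mobius α β γ δ 1) * B.map C)
        (𝕏 0) (𝕏 1) (𝕏 2)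
      = dlRhs MvPolynomial.C (mobius α β γ δ k p) (mobius α β γ δ (k - 1) v) (𝕏 0) (𝕏 1) (𝕏 2) := by
  let ι := algebraMap (MvPolynomial (Fin 3) F) (FractionRing (MvPolynomial (Fin 3) F))
  have hι : Function.Injective ι := IsFractionRing.injective _ _
  let φ := ι.comp MvPolynomial.C
  have hd (t : Fin 3) : φ γ * ι (𝕏 t) + φ δ ≠ 0 := by
    have hγδ : γ ≠ 0 ∨ δ ≠ 0 := by
      contrapose! hcop
      simp [hcop]
    simpa [φ] using (map_ne_zero_iff ι hι).mpr (MvPolynomial.C_mul_X_add_C_ne_zero hγδ t)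
  let σ := MvPolynomial.eval₂Hom φ fun t => (φ α * ι (𝕏 t) + φ β) / (φ γ * ι (𝕏 t) + φ δ)
  have hσ := congrArg σ h
  rw [map_mul, map_sub, map_bivariateForm, map_dlRhs] at hσ
  simp only [σ, MvPolynomial.eval₂Hom_X', MvPolynomial.eval₂Hom_comp_C] at hσ
  apply hι
  rw [map_mul, map_sub, map_bivariateForm, map_dlRhs]
  exact hB.dl_identity_mobius φ hcop hk hA hp hv (hd 0) (hd 1) (hd 2) hσ

end Trivariate

theorem stmt10_general {F : Type*} [Field F] (k m n : ℕ)
    (P : Matrix (Fin m) (Fin n) (Polynomial F)) (hP : ∀ i j, (P i j).natDegree ≤ k)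
    (v : Polynomial F) (hv : v.natDegree ≤ k - 1)
    (α β γ δ : F) (hcop : α * δ - β * γ ≠ 0)
    (L : Matrix (Fin k × Fin m) (Fin k × Fin n) (Polynomial F))
    (hLdeg : ∀ r c, (L r c).natDegree ≤ 1)
    (hL : IsDL k P v L)
    (M : Matrix (Fin k × Fin m) (Fin k × Fin n) (Polynomial F))
    (hM : IsDL k (Matrix.of fun i j => mobius α β γ δ k (P i j))
            (mobius α β γ δ (k - 1) v) M)
    (B : Matrix (Fin k) (Fin k) F)
    (hB : ∀ i : Fin k,
      (∑ j : Fin k, C (B i j) * (X : Polynomial F) ^ (k - 1 - (j : ℕ)))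
        = (C α * X + C β) ^ (k - 1 - (i : ℕ)) * (C γ * X + C δ) ^ (i : ℕ)) :
    ∀ (a : Fin k) (i : Fin m) (b : Fin k) (j : Fin n),
      (∑ a' : Fin k, ∑ b' : Fin k,
        C (B a' a) * C (B b' b) * mobius α β γ δ 1 (L (a', i) (b', j)))
      = M (a, i) (b, j) := by
  rcases Nat.eq_zero_or_pos k with rfl | hk
  · exact fun a => a.elim0
  intro a i b j
  have hX : (MvPolynomial.X 0 - MvPolynomial.X 1 : MvPolynomial (Fin 3) F) ≠ 0 :=
    sub_ne_zero.mpr (MvPolynomial.X_injective.ne (by decide))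
  have hLM := (IsMobiusBasisChange.dl_identity_mobius_polynomial hcop hk hB (fun _ _ => hLdeg _ _)
    (hP i j) hv (isDL_iff.1 hL i j)).trans (isDL_iff.1 hM i j).symm
  have hblock := congrFun₂ (bivariateForm_injective (mul_left_cancel₀ hX hLM)) a b
  exact (transpose_mul_mul_apply (B.map C) ((of fun a b => L (a, i) (b, j)).map (mobius α β γ δ 1))
    (B.map C) a b).symm.trans hblock

theorem stmt10 {F : Type*} [Field F] (k m n : ℕ)
    (P : Matrix (Fin m) (Fin n) (Polynomial F)) (hP : ∀ i j, (P i j).natDegree ≤ k)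
    (v : Polynomial F) (hv : v.natDegree ≤ k - 1)
    (α β γ δ : F) (hcop : α * δ - β * γ ≠ 0)
    (L : Matrix (Fin k × Fin m) (Fin k × Fin n) (Polynomial F))
    (hLdeg : ∀ r c, (L r c).natDegree ≤ 1)
    (hL : IsDL k P v L)
    (M : Matrix (Fin k × Fin m) (Fin k × Fin n) (Polynomial F))
    (hMdeg : ∀ r c, (M r c).natDegree ≤ 1)
    (hM : IsDL k (Matrix.of fun i j => mobius α β γ δ k (P i j))
            (mobius α β γ δ (k - 1) v) M)
    (B : Matrix (Fin k) (Fin k) F)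
    (hB : ∀ i : Fin k,
      (∑ j : Fin k, C (B i j) * (X : Polynomial F) ^ (k - 1 - (j : ℕ)))
        = (C α * X + C β) ^ (k - 1 - (i : ℕ)) * (C γ * X + C δ) ^ (i : ℕ)) :
    ∀ (a : Fin k) (i : Fin m) (b : Fin k) (j : Fin n),
      (∑ a' : Fin k, ∑ b' : Fin k,
        C (B a' a) * C (B b' b) * mobius α β γ δ 1 (L (a', i) (b', j)))
      = M (a, i) (b, j) :=
  stmt10_general k m n P hP v hv α β γ δ hcop L hLdeg hL M hM B hB

end
end

section
/- Let P(z) ∈ 𝔽[z]^{m×n} have degree k ≥ 2, v(z) be a scalar polynomial of degree k−1 with distinct roots μ₁,…,μ_s of multiplicities ℓ₁,…,ℓ_s, μ₀ ∈ 𝔽 differ from all μᵢ, w(z) = (z−μ₀)v(z), and W be the normalized confluent Vandermonde matrix of w(z). Let L(z) = DL(P,v). Then (Wᵀ ⊗ I_m) L(μ₀) (W ⊗ I_n) is a block diagonal direct sum ⊕_{i=0}^{s} Q_i where each Q_i ∈ 𝔽^{mℓᵢ × nℓᵢ} is block anti-triangular with all blocks strictly above the antidiagonal equal to zero and all antidiagonal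 blocks equal to c_i·P(μᵢ), where c_i = w^{(ℓᵢ)}(μᵢ)/ℓᵢ! ≠ 0. -/
open Polynomial Matrix

noncomputable section

set_option maxRecDepth 40000

noncomputable section

namespace Stmt12Aux

variable {F : Type*} [Field F]

local notation "Mv" => MvPolynomial (Fin 2) F

lemma it_add (i : Fin 2) (n : ℕ) (x y : Mv) :
    (MvPolynomial.pderiv i)^[n] (x + y) =
      (MvPolynomial.pderiv i)^[n] x + (MvPolynomial.pderiv i)^[n] y := by
  induction n generalizing x y with
  | zero => simp
  | succ n ih => simp only [Function.iterate_succ_apply', ih, map_add]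

lemma it_sub (i : Fin 2) (n : ℕ) (x y : Mv) :
    (MvPolynomial.pderiv i)^[n] (x - y) =
      (MvPolynomial.pderiv i)^[n] x - (MvPolynomial.pderiv i)^[n] y := by
  induction n generalizing x y with
  | zero => simp
  | succ n ih => simp only [Function.iterate_succ_apply', ih, map_sub]

lemma it_Cmul (i : Fin 2) (n : ℕ) (c : F) (x : Mv) :
    (MvPolynomial.pderiv i)^[n] (MvPolynomial.C c * x) =
      MvPolynomial.C c * (MvPolynomial.pderiv i)^[n] x := by
  induction n generalizing x with
  | zero => simp
  | succ n ih => simp only [Function.iterate_succ_apply', ih, MvPolynomial.pderiv_C_mul]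

lemma it_sum {ι : Type*} (i : Fin 2) (n : ℕ) (t : Finset ι) (f : ι → Mv) :
    (MvPolynomial.pderiv i)^[n] (∑ j ∈ t, f j) = ∑ j ∈ t, (MvPolynomial.pderiv i)^[n] (f j) := by
  induction n with
  | zero => simp
  | succ n ih => simp only [Function.iterate_succ_apply', ih, map_sum]

lemma pd_aeval_same (i : Fin 2) (q : F[X]) :
    MvPolynomial.pderiv i (Polynomial.aeval (MvPolynomial.X i : Mv) q) =
      Polynomial.aeval (MvPolynomial.X i : Mv) (derivative q) := by
  induction q using Polynomial.induction_on' with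
  | add p q hp hq => simp [map_add, hp, hq]
  | monomial n a =>
    simp only [Polynomial.aeval_monomial, MvPolynomial.algebraMap_eq,
      MvPolynomial.pderiv_C_mul, MvPolynomial.pderiv_pow, MvPolynomial.pderiv_X_self, mul_one,
      Polynomial.derivative_monomial, _root_.map_mul, MvPolynomial.C_mul, map_natCast]
    ring

lemma pd_aeval_ne {i j : Fin 2} (h : i ≠ j) (q : F[X]) :
    MvPolynomial.pderiv i (Polynomial.aeval (MvPolynomial.X j : Mv) q) = 0 := by
  induction q using Polynomial.induction_on' with
  | add p q hp hq => simp [map_add, hp, hq]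
  | monomial n a =>
    simp [Polynomial.aeval_monomial, MvPolynomial.algebraMap_eq, MvPolynomial.pderiv_C_mul,
      MvPolynomial.pderiv_pow, MvPolynomial.pderiv_X_of_ne (Ne.symm h)]

lemma it0 (b : ℕ) (A B : F[X]) :
    (MvPolynomial.pderiv (0 : Fin 2))^[b]
        (Polynomial.aeval (MvPolynomial.X 1 : Mv) A * Polynomial.aeval (MvPolynomial.X 0 : Mv) B) =
      Polynomial.aeval (MvPolynomial.X 1 : Mv) A *
        Polynomial.aeval (MvPolynomial.X 0 : Mv) (derivative^[b] B) := by
  induction b generalizing B with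
  | zero => simp
  | succ b ih =>
    rw [Function.iterate_succ_apply, MvPolynomial.pderiv_mul,
      pd_aeval_ne (by decide), pd_aeval_same, zero_mul, zero_add, ih,
      Function.iterate_succ_apply]

lemma it1 (a : ℕ) (A B : F[X]) :
    (MvPolynomial.pderiv (1 : Fin 2))^[a]
        (Polynomial.aeval (MvPolynomial.X 1 : Mv) A * Polynomial.aeval (MvPolynomial.X 0 : Mv) B) =
      Polynomial.aeval (MvPolynomial.X 1 : Mv) (derivative^[a] A) *
        Polynomial.aeval (MvPolynomial.X 0 : Mv) B := by
  induction a generalizing A with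
  | zero => simp
  | succ a ih =>
    rw [Function.iterate_succ_apply, MvPolynomial.pderiv_mul, pd_aeval_same,
      pd_aeval_ne (show (1 : Fin 2) ≠ (0 : Fin 2) by decide), mul_zero, add_zero, ih,
      Function.iterate_succ_apply]

lemma key_prod (a b : ℕ) (A B : F[X]) :
    (MvPolynomial.pderiv (1 : Fin 2))^[a] ((MvPolynomial.pderiv (0 : Fin 2))^[b]
        (Polynomial.aeval (MvPolynomial.X 1 : Mv) A * Polynomial.aeval (MvPolynomial.X 0 : Mv) B)) =
      Polynomial.aeval (MvPolynomial.X 1 : Mv) (derivative^[a] A) *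
        Polynomial.aeval (MvPolynomial.X 0 : Mv) (derivative^[b] B) := by
  rw [it0, it1]

lemma lb0succ (b : ℕ) (G : Mv) :
    (MvPolynomial.pderiv (0 : Fin 2))^[b + 1]
        ((MvPolynomial.X 0 - MvPolynomial.X 1) * G) =
      (MvPolynomial.X 0 - MvPolynomial.X 1) * (MvPolynomial.pderiv (0 : Fin 2))^[b + 1] G +
        MvPolynomial.C ((b : F) + 1) * (MvPolynomial.pderiv (0 : Fin 2))^[b] G := by
  induction b generalizing G with
  | zero =>
    simp only [Function.iterate_one, Function.iterate_zero_apply, MvPolynomial.pderiv_mul,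
      map_sub, MvPolynomial.pderiv_X_self, MvPolynomial.pderiv_X_of_ne (by decide : (1:Fin 2) ≠ 0),
      sub_zero, one_mul, Nat.cast_zero, zero_add, _root_.map_one]
    ring
  | succ b ih =>
    rw [show b + 1 + 1 = (b + 1) + 1 from rfl, Function.iterate_succ_apply', ih,
      show ((MvPolynomial.pderiv (0 : Fin 2)))^[b + 1 + 1] G =
        MvPolynomial.pderiv (0 : Fin 2) ((MvPolynomial.pderiv (0 : Fin 2))^[b + 1] G) from
        Function.iterate_succ_apply' _ _ _,
      show ((MvPolynomial.pderiv (0 : Fin 2)))^[b + 1] G =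
        MvPolynomial.pderiv (0 : Fin 2) ((MvPolynomial.pderiv (0 : Fin 2))^[b] G) from
        Function.iterate_succ_apply' _ _ _]
    simp only [map_add, MvPolynomial.pderiv_mul, MvPolynomial.pderiv_C_mul, map_sub,
      MvPolynomial.pderiv_X_self, MvPolynomial.pderiv_X_of_ne (by decide : (1:Fin 2) ≠ 0),
      sub_zero, one_mul]
    push_cast
    simp only [MvPolynomial.pderiv_C, MvPolynomial.pderiv_one, _root_.map_add, _root_.map_one, zero_mul, add_zero]
    all_goals ring

lemma lb1succ (a : ℕ) (G : Mv) :
    (MvPolynomial.pderiv (1 : Fin 2))^[a + 1]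
        ((MvPolynomial.X 0 - MvPolynomial.X 1) * G) =
      (MvPolynomial.X 0 - MvPolynomial.X 1) * (MvPolynomial.pderiv (1 : Fin 2))^[a + 1] G -
        MvPolynomial.C ((a : F) + 1) * (MvPolynomial.pderiv (1 : Fin 2))^[a] G := by
  induction a generalizing G with
  | zero =>
    simp only [Function.iterate_one, Function.iterate_zero_apply, MvPolynomial.pderiv_mul,
      map_sub, MvPolynomial.pderiv_X_self, MvPolynomial.pderiv_X_of_ne (by decide : (0:Fin 2) ≠ 1),
      zero_sub, Nat.cast_zero, zero_add, _root_.map_one]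
    ring
  | succ a ih =>
    rw [show a + 1 + 1 = (a + 1) + 1 from rfl, Function.iterate_succ_apply', ih,
      show ((MvPolynomial.pderiv (1 : Fin 2)))^[a + 1 + 1] G =
        MvPolynomial.pderiv (1 : Fin 2) ((MvPolynomial.pderiv (1 : Fin 2))^[a + 1] G) from
        Function.iterate_succ_apply' _ _ _,
      show ((MvPolynomial.pderiv (1 : Fin 2)))^[a + 1] G =
        MvPolynomial.pderiv (1 : Fin 2) ((MvPolynomial.pderiv (1 : Fin 2))^[a] G) from
        Function.iterate_succ_apply' _ _ _]
    simp only [map_sub, MvPolynomial.pderiv_mul, MvPolynomial.pderiv_C_mul,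
      MvPolynomial.pderiv_X_self, MvPolynomial.pderiv_X_of_ne (by decide : (0:Fin 2) ≠ 1),
      zero_sub, one_mul]
    push_cast
    simp only [MvPolynomial.pderiv_C, MvPolynomial.pderiv_one, _root_.map_add, _root_.map_one, zero_mul, add_zero]
    all_goals ring

lemma mixed (a b : ℕ) (G : Mv) :
    (MvPolynomial.pderiv (1 : Fin 2))^[a] ((MvPolynomial.pderiv (0 : Fin 2))^[b]
        ((MvPolynomial.X 0 - MvPolynomial.X 1) * G)) =
      (MvPolynomial.X 0 - MvPolynomial.X 1) *
          (MvPolynomial.pderiv (1 : Fin 2))^[a] ((MvPolynomial.pderiv (0 : Fin 2))^[b] G) -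
        MvPolynomial.C (a : F) *
          (MvPolynomial.pderiv (1 : Fin 2))^[a - 1] ((MvPolynomial.pderiv (0 : Fin 2))^[b] G) +
        MvPolynomial.C (b : F) *
          (MvPolynomial.pderiv (1 : Fin 2))^[a] ((MvPolynomial.pderiv (0 : Fin 2))^[b - 1] G) := by
  match a, b with
  | 0, 0 => simp
  | 0, b + 1 =>
    rw [lb0succ]
    simp only [Function.iterate_zero_apply, Nat.cast_zero, map_zero, zero_mul, sub_zero,
      Nat.add_sub_cancel]
    push_cast
    simp only [MvPolynomial.pderiv_C, MvPolynomial.pderiv_one, _root_.map_add, _root_.map_one, zero_mul, add_zero]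
    all_goals ring
  | a + 1, 0 =>
    simp only [Function.iterate_zero_apply]
    rw [lb1succ]
    simp only [Nat.cast_zero, map_zero, zero_mul, add_zero, Nat.add_sub_cancel]
    push_cast
    simp only [MvPolynomial.pderiv_C, MvPolynomial.pderiv_one, _root_.map_add, _root_.map_one, zero_mul, add_zero]
    all_goals ring
  | a + 1, b + 1 =>
    rw [lb0succ, it_add, it_Cmul, lb1succ]
    simp only [Nat.add_sub_cancel]
    push_cast
    simp only [MvPolynomial.pderiv_C, MvPolynomial.pderiv_one, _root_.map_add, _root_.map_one, zero_mul, add_zero]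
    all_goals ring

lemma ev_aeval (π : Fin 2 → F) (i : Fin 2) (q : F[X]) :
    MvPolynomial.aeval π (Polynomial.aeval (MvPolynomial.X i : Mv) q) =
      Polynomial.eval (π i) q := by
  rw [← Polynomial.aeval_algHom_apply, MvPolynomial.aeval_X, ← Polynomial.coe_aeval_eq_eval]

lemma aeval_C_mv (z : F) (q : F[X]) :
    Polynomial.aeval (MvPolynomial.C z : Mv) q = MvPolynomial.C (q.eval z) := by
  induction q using Polynomial.induction_on' with
  | add p q hp hq => simp [map_add, hp, hq]
  | monomial n a =>
    rw [Polynomial.aeval_monomial, MvPolynomial.algebraMap_eq, Polynomial.eval_monomial,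
      ← map_pow, ← _root_.map_mul]

lemma bridge (k : ℕ) (t : Fin k → Fin k → F) (p w : F[X])
    (hG : (MvPolynomial.X 0 - MvPolynomial.X 1) *
        (∑ ρ : Fin k, ∑ σ : Fin k,
          (MvPolynomial.X 1 : Mv) ^ (k - 1 - (ρ : ℕ)) * MvPolynomial.X 0 ^ (k - 1 - (σ : ℕ)) *
            MvPolynomial.C (t ρ σ)) =
      Polynomial.aeval (MvPolynomial.X 1 : Mv) p * Polynomial.aeval (MvPolynomial.X 0 : Mv) w -
        Polynomial.aeval (MvPolynomial.X 0 : Mv) p * Polynomial.aeval (MvPolynomial.X 1 : Mv) w)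
    (α β : F) :
    ∃ D : ℕ → ℕ → F,
      (∀ a b : ℕ,
        (β - α) * D a b - (a : F) * D (a - 1) b + (b : F) * D a (b - 1) =
          Polynomial.eval α (derivative^[a] p) * Polynomial.eval β (derivative^[b] w) -
            Polynomial.eval β (derivative^[b] p) * Polynomial.eval α (derivative^[a] w)) ∧
      (∀ a b : ℕ,
        (∑ ρ : Fin k, ∑ σ : Fin k,
          ((a.factorial : F))⁻¹ *
            Polynomial.eval α (derivative^[a] ((X : F[X]) ^ (k - 1 - (ρ : ℕ)))) *
          (((b.factorial : F))⁻¹ *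
            Polynomial.eval β (derivative^[b] ((X : F[X]) ^ (k - 1 - (σ : ℕ))))) *
          t ρ σ) = ((a.factorial : F))⁻¹ * (((b.factorial : F))⁻¹ * D a b)) := by
  set G : Mv := ∑ ρ : Fin k, ∑ σ : Fin k,
    (MvPolynomial.X 1 : Mv) ^ (k - 1 - (ρ : ℕ)) * MvPolynomial.X 0 ^ (k - 1 - (σ : ℕ)) *
      MvPolynomial.C (t ρ σ) with hGdef
  have hGeq : G = ∑ ρ : Fin k, ∑ σ : Fin k,
      MvPolynomial.C (t ρ σ) *
        (Polynomial.aeval (MvPolynomial.X 1 : Mv) ((X : F[X]) ^ (k - 1 - (ρ : ℕ))) *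
          Polynomial.aeval (MvPolynomial.X 0 : Mv) ((X : F[X]) ^ (k - 1 - (σ : ℕ)))) := by
    rw [hGdef]
    refine Finset.sum_congr rfl fun ρ _ => Finset.sum_congr rfl fun σ _ => ?_
    simp only [_root_.map_mul, map_pow, Polynomial.aeval_X]
    ring
  refine ⟨fun a b => MvPolynomial.aeval ![β, α] ((MvPolynomial.pderiv (1 : Fin 2))^[a]
      ((MvPolynomial.pderiv (0 : Fin 2))^[b] G)), ?_, ?_⟩
  · intro a b
    have h1 : (MvPolynomial.pderiv (1 : Fin 2))^[a] ((MvPolynomial.pderiv (0 : Fin 2))^[b]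
        ((MvPolynomial.X 0 - MvPolynomial.X 1) * G)) =
        (MvPolynomial.pderiv (1 : Fin 2))^[a] ((MvPolynomial.pderiv (0 : Fin 2))^[b]
          (Polynomial.aeval (MvPolynomial.X 1 : Mv) p * Polynomial.aeval (MvPolynomial.X 0 : Mv) w -
            Polynomial.aeval (MvPolynomial.X 0 : Mv) p *
              Polynomial.aeval (MvPolynomial.X 1 : Mv) w)) := by rw [hG]
    rw [mixed, show Polynomial.aeval (MvPolynomial.X 0 : Mv) p *
        Polynomial.aeval (MvPolynomial.X 1 : Mv) w =
        Polynomial.aeval (MvPolynomial.X 1 : Mv) w *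
          Polynomial.aeval (MvPolynomial.X 0 : Mv) p from mul_comm _ _,
      it_sub, it_sub, key_prod, key_prod] at h1
    have h := congrArg (MvPolynomial.aeval (R := F) ![β, α]) h1
    simp only [map_sub, map_add, _root_.map_mul, MvPolynomial.aeval_C, MvPolynomial.aeval_X,
      Matrix.cons_val_zero, Matrix.cons_val_one, Matrix.head_cons, ev_aeval,
      Algebra.algebraMap_self, RingHom.id_apply] at h
    linear_combination h
  · intro a b
    beta_reduce
    have hval : MvPolynomial.aeval ![β, α] ((MvPolynomial.pderiv (1 : Fin 2))^[a]
        ((MvPolynomial.pderiv (0 : Fin 2))^[b] G)) =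
        ∑ ρ : Fin k, ∑ σ : Fin k,
          Polynomial.eval α (derivative^[a] ((X : F[X]) ^ (k - 1 - (ρ : ℕ)))) *
            (t ρ σ * Polynomial.eval β (derivative^[b] ((X : F[X]) ^ (k - 1 - (σ : ℕ))))) := by
      rw [hGeq]
      simp only [it_sum, it_Cmul, key_prod, map_sum, _root_.map_mul, MvPolynomial.aeval_C,
        ev_aeval, Matrix.cons_val_zero, Matrix.cons_val_one, Matrix.head_cons,
        Algebra.algebraMap_self, RingHom.id_apply]
      exact Finset.sum_congr rfl fun ρ _ => Finset.sum_congr rfl fun σ _ => by ring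
    rw [hval]
    simp only [Finset.mul_sum]
    refine Finset.sum_congr rfl fun ρ _ => Finset.sum_congr rfl fun σ _ => by ring

lemma zrec1 (D N : ℕ → ℕ → F) (β α : F) (hne : β ≠ α)
    (hrel : ∀ a b : ℕ, (β - α) * D a b - (a : F) * D (a - 1) b + (b : F) * D a (b - 1) = N a b)
    (A B : ℕ) (hN : ∀ a b : ℕ, a < A → b < B → N a b = 0) :
    ∀ a b : ℕ, a < A → b < B → D a b = 0 := by
  have hba : β - α ≠ 0 := sub_ne_zero.mpr hne
  suffices h : ∀ n a b : ℕ, a + b ≤ n → a < A → b < B → D a b = 0 by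
    exact fun a b ha hb => h (a + b) a b le_rfl ha hb
  intro n
  induction n with
  | zero =>
    intro a b hab ha hb
    obtain ⟨rfl, rfl⟩ : a = 0 ∧ b = 0 := by omega
    have h := hrel 0 0
    rw [hN 0 0 ha hb] at h
    simp only [Nat.cast_zero, zero_mul, sub_zero, add_zero] at h
    exact (mul_eq_zero.mp h).resolve_left hba
  | succ n ih =>
    intro a b hab ha hb
    have h := hrel a b
    rw [hN a b ha hb] at h
    have h1 : (a : F) * D (a - 1) b = 0 := by
      match a with
      | 0 => simp
      | a' + 1 =>
        rw [show a' + 1 - 1 = a' from rfl, ih a' b (by omega) (by omega) hb, mul_zero]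
    have h2 : (b : F) * D a (b - 1) = 0 := by
      match b with
      | 0 => simp
      | b' + 1 =>
        rw [show b' + 1 - 1 = b' from rfl, ih a b' (by omega) ha (by omega), mul_zero]
    have h3 : (β - α) * D a b = 0 := by linear_combination h + h1 - h2
    exact (mul_eq_zero.mp h3).resolve_left hba

lemma zrec2 [CharZero F] (D N : ℕ → ℕ → F)
    (hrel : ∀ a b : ℕ, (b : F) * D a (b - 1) - (a : F) * D (a - 1) b = N a b)
    (A : ℕ) (hN : ∀ a b : ℕ, a < A → b < A → N a b = 0) :
    ∀ a b : ℕ, a + b + 1 < A → D a b = 0 := by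
  intro a
  induction a with
  | zero =>
    intro b hb
    have h := hrel 0 (b + 1)
    rw [hN 0 (b + 1) (by omega) (by omega)] at h
    simp only [Nat.cast_zero, zero_mul, sub_zero, Nat.add_sub_cancel] at h
    have hb1 : ((b : F) + 1) ≠ 0 := by
      have : (((b + 1 : ℕ)) : F) ≠ 0 := Nat.cast_ne_zero.mpr (Nat.succ_ne_zero b)
      push_cast at this; exact this
    rcases mul_eq_zero.mp h with h' | h'
    · exact absurd h' (by push_cast; exact hb1)
    · exact h'
  | succ a' ih =>
    intro b hb
    have h := hrel (a' + 1) (b + 1)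
    rw [hN (a' + 1) (b + 1) (by omega) (by omega)] at h
    rw [show a' + 1 - 1 = a' from rfl, Nat.add_sub_cancel, ih (b + 1) (by omega), mul_zero,
      sub_zero] at h
    have hb1 : (((b + 1 : ℕ)) : F) ≠ 0 := Nat.cast_ne_zero.mpr (Nat.succ_ne_zero b)
    rcases mul_eq_zero.mp h with h' | h'
    · exact absurd h' (by push_cast at hb1 ⊢; exact hb1)
    · exact h'

lemma zrec3 [CharZero F] (D N : ℕ → ℕ → F)
    (hrel : ∀ a b : ℕ, (b : F) * D a (b - 1) - (a : F) * D (a - 1) b = N a b)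
    (A : ℕ) (hN : ∀ a b : ℕ, a < A → b < A → N a b = 0) (e : F) (he : N 0 A = e) :
    ∀ a b : ℕ, a + b + 1 = A → D a b =
      ((a.factorial : F) * (b.factorial : F)) * ((A.factorial : F))⁻¹ * e := by
  intro a
  induction a with
  | zero =>
    intro b hb
    have h := hrel 0 (b + 1)
    rw [show (0 : ℕ) + b + 1 = b + 1 from by omega] at hb
    simp only [Nat.cast_zero, zero_mul, sub_zero, Nat.add_sub_cancel] at h
    rw [show N 0 (b + 1) = e from by rw [hb]; exact he] at h
    have hb1 : ((b : F) + 1) ≠ 0 := by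
      have : (((b + 1 : ℕ)) : F) ≠ 0 := Nat.cast_ne_zero.mpr (Nat.succ_ne_zero b)
      push_cast at this; exact this
    have hbf : ((b.factorial : F)) ≠ 0 := Nat.cast_ne_zero.mpr b.factorial_ne_zero
    push_cast at h
    have hD : D 0 b = ((b : F) + 1)⁻¹ * e := by
      rw [inv_mul_eq_div, eq_div_iff hb1]
      linear_combination h
    subst hb
    rw [hD, Nat.factorial_succ, Nat.factorial_zero]
    push_cast
    rw [mul_inv]
    field_simp
  | succ a' ih =>
    intro b hb
    have h := hrel (a' + 1) (b + 1)
    rw [hN (a' + 1) (b + 1) (by omega) (by omega)] at h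
    rw [show a' + 1 - 1 = a' from rfl, Nat.add_sub_cancel,
      ih (b + 1) (by omega)] at h
    have hb1 : ((b : F) + 1) ≠ 0 := by
      have : (((b + 1 : ℕ)) : F) ≠ 0 := Nat.cast_ne_zero.mpr (Nat.succ_ne_zero b)
      push_cast at this; exact this
    have hAf : ((A.factorial : F)) ≠ 0 := Nat.cast_ne_zero.mpr A.factorial_ne_zero
    push_cast at h
    have hD : D (a' + 1) b = ((a' : F) + 1) *
        ((a'.factorial : F) * ((b + 1).factorial : F) * ((A.factorial : F))⁻¹ * e) /
          ((b : F) + 1) := by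
      rw [eq_div_iff hb1]
      push_cast
      linear_combination h
    rw [hD, Nat.factorial_succ b, Nat.factorial_succ a']
    push_cast
    have hbf : ((b.factorial : F)) ≠ 0 := Nat.cast_ne_zero.mpr b.factorial_ne_zero
    field_simp

end Stmt12Aux

theorem stmt12 {F : Type*} [Field F] [IsAlgClosed F] [CharZero F]
    (k m n s : ℕ) (hk : 2 ≤ k)
    (μ : Fin (s + 1) → F) (hμ : Function.Injective μ)
    (ℓ : Fin (s + 1) → ℕ) (hℓ0 : ℓ 0 = 1) (hℓ : ∀ i, 0 < ℓ i) (hsum : ∑ i, ℓ i = k)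
    (c0 : F) (hc0 : c0 ≠ 0)
    (w : Polynomial F) (hw : w = C c0 * ∏ i, (X - C (μ i)) ^ ℓ i)
    (v : Polynomial F) (hv : (X - C (μ 0)) * v = w)
    (P : Matrix (Fin m) (Fin n) (Polynomial F))
    (hPdeg : ∀ i j, (P i j).natDegree ≤ k) (hPk : ∃ i j, (P i j).coeff k ≠ 0)
    (L : Matrix (Fin k × Fin m) (Fin k × Fin n) (Polynomial F))
    (hLdeg : ∀ r c, (L r c).natDegree ≤ 1)
    (hL : IsDL k P v L) :
    -- the entries of (Wᵀ ⊗ I_m) · L(μ₀) · (W ⊗ I_n), with block rows/columns indexed by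
    -- pairs (i, a) with i : Fin (s+1) and a < ℓ i, are given as follows:
    -- (1) the off-diagonal blocks Q_{i i'}, i ≠ i', vanish;
    -- (2) within Q_i, the blocks strictly above the antidiagonal vanish;
    -- (3) the antidiagonal blocks of Q_i all equal c_i · P(μ_i), with c_i ≠ 0.
    (∀ (i i' : Fin (s + 1)) (a : Fin (ℓ i)) (b : Fin (ℓ i')) (r : Fin m) (c : Fin n),
      i ≠ i' →
        (∑ ρ : Fin k, ∑ σ : Fin k,
          (((a : ℕ).factorial : F))⁻¹ *
            Polynomial.eval (μ i) (Polynomial.derivative^[(a : ℕ)]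
              ((X : Polynomial F) ^ (k - 1 - (ρ : ℕ)))) *
          ((((b : ℕ).factorial : F))⁻¹ *
            Polynomial.eval (μ i') (Polynomial.derivative^[(b : ℕ)]
              ((X : Polynomial F) ^ (k - 1 - (σ : ℕ))))) *
          Polynomial.eval (μ 0) (L (ρ, r) (σ, c))) = 0) ∧
    (∀ (i : Fin (s + 1)) (a b : Fin (ℓ i)) (r : Fin m) (c : Fin n),
      (a : ℕ) + (b : ℕ) + 1 < ℓ i →
        (∑ ρ : Fin k, ∑ σ : Fin k,
          (((a : ℕ).factorial : F))⁻¹ *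
            Polynomial.eval (μ i) (Polynomial.derivative^[(a : ℕ)]
              ((X : Polynomial F) ^ (k - 1 - (ρ : ℕ)))) *
          ((((b : ℕ).factorial : F))⁻¹ *
            Polynomial.eval (μ i) (Polynomial.derivative^[(b : ℕ)]
              ((X : Polynomial F) ^ (k - 1 - (σ : ℕ))))) *
          Polynomial.eval (μ 0) (L (ρ, r) (σ, c))) = 0) ∧
    (∀ (i : Fin (s + 1)) (a b : Fin (ℓ i)) (r : Fin m) (c : Fin n),
      (a : ℕ) + (b : ℕ) + 1 = ℓ i →
        (∑ ρ : Fin k, ∑ σ : Fin k,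
          (((a : ℕ).factorial : F))⁻¹ *
            Polynomial.eval (μ i) (Polynomial.derivative^[(a : ℕ)]
              ((X : Polynomial F) ^ (k - 1 - (ρ : ℕ)))) *
          ((((b : ℕ).factorial : F))⁻¹ *
            Polynomial.eval (μ i) (Polynomial.derivative^[(b : ℕ)]
              ((X : Polynomial F) ^ (k - 1 - (σ : ℕ))))) *
          Polynomial.eval (μ 0) (L (ρ, r) (σ, c)))
        = (((ℓ i).factorial : F))⁻¹ *
            Polynomial.eval (μ i) (Polynomial.derivative^[ℓ i] w) *
            Polynomial.eval (μ i) (P r c)) ∧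
    (∀ i : Fin (s + 1),
      (((ℓ i).factorial : F))⁻¹ * Polynomial.eval (μ i) (Polynomial.derivative^[ℓ i] w) ≠ 0) := by
  classical
  have hfact : ∀ N : ℕ, ((N.factorial : F)) ≠ 0 := fun N =>
    Nat.cast_ne_zero.mpr N.factorial_ne_zero
  have hwne : w ≠ 0 := by
    rw [hw]
    exact mul_ne_zero (Polynomial.C_ne_zero.mpr hc0)
      (Finset.prod_ne_zero_iff.mpr fun j _ => pow_ne_zero _ (Polynomial.X_sub_C_ne_zero (μ j)))
  have hmult : ∀ i : Fin (s + 1), w.rootMultiplicity (μ i) = ℓ i := by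
    intro i
    have hrest : ¬ Polynomial.IsRoot
        (C c0 * ∏ j ∈ Finset.univ.erase i, (X - C (μ j)) ^ ℓ j) (μ i) := by
      simp only [Polynomial.IsRoot, eval_mul, eval_C, Polynomial.eval_prod, eval_pow, eval_sub,
        eval_X]
      refine fun hz => absurd hz (mul_ne_zero hc0 (Finset.prod_ne_zero_iff.mpr fun j hj =>
        pow_ne_zero _ ?_))
      exact sub_ne_zero.mpr fun hji => (Finset.mem_erase.mp hj).1 (hμ hji).symm
    have hw2 : w = (X - C (μ i)) ^ ℓ i *
        (C c0 * ∏ j ∈ Finset.univ.erase i, (X - C (μ j)) ^ ℓ j) := by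
      rw [hw, ← Finset.mul_prod_erase Finset.univ _ (Finset.mem_univ i)]
      ring
    rw [hw2, Polynomial.rootMultiplicity_mul (by rw [← hw2]; exact hwne),
      Polynomial.rootMultiplicity_X_sub_C_pow, Polynomial.rootMultiplicity_eq_zero hrest,
      add_zero]
  have hwlt : ∀ (i : Fin (s + 1)) (j : ℕ), j < ℓ i →
      Polynomial.eval (μ i) (Polynomial.derivative^[j] w) = 0 := fun i j hj =>
    Polynomial.isRoot_iterate_derivative_of_lt_rootMultiplicity (by rw [hmult i]; exact hj)
  have hwtop : ∀ i : Fin (s + 1),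
      Polynomial.eval (μ i) (Polynomial.derivative^[ℓ i] w) ≠ 0 := by
    intro i hz
    have hlt : ℓ i < w.rootMultiplicity (μ i) := by
      refine Polynomial.lt_rootMultiplicity_of_isRoot_iterate_derivative_of_mem_nonZeroDivisors
        hwne (fun m hm => ?_) (mem_nonZeroDivisors_of_ne_zero (hfact (ℓ i)))
      rcases eq_or_lt_of_le hm with rfl | hlt'
      · exact hz
      · exact hwlt i m hlt'
    rw [hmult i] at hlt
    exact lt_irrefl _ hlt
  have hGmain : ∀ (r : Fin m) (c : Fin n),
      (MvPolynomial.X 0 - MvPolynomial.X 1) *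
        (∑ ρ : Fin k, ∑ σ : Fin k,
          (MvPolynomial.X 1 : MvPolynomial (Fin 2) F) ^ (k - 1 - (ρ : ℕ)) *
            MvPolynomial.X 0 ^ (k - 1 - (σ : ℕ)) *
            MvPolynomial.C (Polynomial.eval (μ 0) (L (ρ, r) (σ, c)))) =
      Polynomial.aeval (MvPolynomial.X 1) (P r c) * Polynomial.aeval (MvPolynomial.X 0) w -
        Polynomial.aeval (MvPolynomial.X 0) (P r c) *
          Polynomial.aeval (MvPolynomial.X 1) w := by
    intro r c
    have h := congrArg (MvPolynomial.aeval (R := F)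
      ![(MvPolynomial.X 0 : MvPolynomial (Fin 2) F), MvPolynomial.X 1,
        MvPolynomial.C (μ 0)]) (hL r c)
    simp only [map_sub, _root_.map_mul, map_sum, map_pow, ← Polynomial.aeval_algHom_apply,
      MvPolynomial.aeval_X, Matrix.cons_val_zero, Matrix.cons_val_one, Matrix.head_cons,
      Matrix.cons_val_two, Matrix.tail_cons, Stmt12Aux.aeval_C_mv] at h
    rw [h, ← hv]
    simp only [_root_.map_mul, map_sub, Polynomial.aeval_X, Polynomial.aeval_C,
      MvPolynomial.algebraMap_eq]
    ring
  refine ⟨?_, ?_, ?_, fun i => mul_ne_zero (inv_ne_zero (hfact (ℓ i))) (hwtop i)⟩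
  · -- off-diagonal blocks vanish
    intro i i' a b r c hii
    obtain ⟨D, hrel, hsum⟩ := Stmt12Aux.bridge k
      (fun ρ σ => Polynomial.eval (μ 0) (L (ρ, r) (σ, c))) (P r c) w (hGmain r c)
      (μ i) (μ i')
    have hne : μ i' ≠ μ i := fun h => hii (hμ h).symm
    have hz : D (a : ℕ) (b : ℕ) = 0 := by
      refine Stmt12Aux.zrec1 D
        (fun a b => Polynomial.eval (μ i) (Polynomial.derivative^[a] (P r c)) *
            Polynomial.eval (μ i') (Polynomial.derivative^[b] w) -
          Polynomial.eval (μ i') (Polynomial.derivative^[b] (P r c)) *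
            Polynomial.eval (μ i) (Polynomial.derivative^[a] w))
        (μ i') (μ i) hne hrel (ℓ i) (ℓ i') (fun a b ha hb => ?_) a b a.isLt b.isLt
      rw [hwlt i a ha, hwlt i' b hb, mul_zero, mul_zero, sub_zero]
    refine (hsum (a : ℕ) (b : ℕ)).trans ?_
    rw [hz, mul_zero, mul_zero]
  · -- strictly above the antidiagonal
    intro i a b r c hab
    obtain ⟨D, hrel, hsum⟩ := Stmt12Aux.bridge k
      (fun ρ σ => Polynomial.eval (μ 0) (L (ρ, r) (σ, c))) (P r c) w (hGmain r c)
      (μ i) (μ i)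
    have hrel0 : ∀ a b : ℕ, (b : F) * D a (b - 1) - (a : F) * D (a - 1) b =
        Polynomial.eval (μ i) (Polynomial.derivative^[a] (P r c)) *
            Polynomial.eval (μ i) (Polynomial.derivative^[b] w) -
          Polynomial.eval (μ i) (Polynomial.derivative^[b] (P r c)) *
            Polynomial.eval (μ i) (Polynomial.derivative^[a] w) := fun a b => by
      linear_combination hrel a b
    have hz : D (a : ℕ) (b : ℕ) = 0 := by
      refine Stmt12Aux.zrec2 D _ hrel0 (ℓ i) (fun a b ha hb => ?_) a b hab
      rw [hwlt i a ha, hwlt i b hb, mul_zero, mul_zero, sub_zero]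
    refine (hsum (a : ℕ) (b : ℕ)).trans ?_
    rw [hz, mul_zero, mul_zero]
  · -- antidiagonal blocks
    intro i a b r c hab
    obtain ⟨D, hrel, hsum⟩ := Stmt12Aux.bridge k
      (fun ρ σ => Polynomial.eval (μ 0) (L (ρ, r) (σ, c))) (P r c) w (hGmain r c)
      (μ i) (μ i)
    have hrel0 : ∀ a b : ℕ, (b : F) * D a (b - 1) - (a : F) * D (a - 1) b =
        Polynomial.eval (μ i) (Polynomial.derivative^[a] (P r c)) *
            Polynomial.eval (μ i) (Polynomial.derivative^[b] w) -
          Polynomial.eval (μ i) (Polynomial.derivative^[b] (P r c)) *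
            Polynomial.eval (μ i) (Polynomial.derivative^[a] w) := fun a b => by
      linear_combination hrel a b
    have hw0 : Polynomial.eval (μ i) w = 0 := by
      have := hwlt i 0 (hℓ i)
      simpa using this
    have hz : D (a : ℕ) (b : ℕ) = (((a : ℕ).factorial : F) * ((b : ℕ).factorial : F)) *
        (((ℓ i).factorial : F))⁻¹ *
        (Polynomial.eval (μ i) (P r c) *
          Polynomial.eval (μ i) (Polynomial.derivative^[ℓ i] w)) := by
      refine Stmt12Aux.zrec3 D _ hrel0 (ℓ i) (fun a b ha hb => ?_) _ ?_ a b hab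
      · rw [hwlt i a ha, hwlt i b hb, mul_zero, mul_zero, sub_zero]
      · simp only [Function.iterate_zero_apply]
        rw [hw0, mul_zero, sub_zero]
    refine (hsum (a : ℕ) (b : ℕ)).trans ?_
    rw [hz]
    have ha := hfact (a : ℕ)
    have hb := hfact (b : ℕ)
    have hcl := hfact (ℓ i)
    field_simp

end
end
end
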